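/- arXiv:1102.3216 — 10 statements merged into one kernel-verified Lean document; each statement's English description precedes it below -/
import Mathlib

section
/- Let n,m be positive integers, Q > 0, w ≥ 1, and 0 ≤ Q* ≤ Q. Let 0 < h₁ < ⋯ < hₙ and 0 < g₁ < ⋯ < g_m, let p ∈ ℝⁿ and q ∈ ℝᵐ be probability vectors with positive entries, and set aᵢ = Q* + 1/hᵢ², bⱼ = Q* + 1/gⱼ². Assume Σᵢ pᵢ/aᵢ = w Σⱼ qⱼ/bⱼ. Suppose A is an n×m matrix with nonnegative entries such that (i) each column of A sums to 1, (ii) Σᵢ Aᵢⱼ aᵢ = bⱼ for every j, and (iii) for every k ∈ {1,…,n}, Σ_{i=1}^k pᵢ/aᵢ ≤ w Σⱼ (qⱼ/bⱼ)(Σ_{i=1}^k Aᵢⱼ). Then for every f = (f₁,…,fₙ) ∈ ℝⁿ satisfying fₙ ≥ ½log₂(2πe/hₙ²), f₁ ≤ ½log₂(2πe(Q + 1/h₁²)), and 2^{2fᵢ} − 2πe/hᵢ² ≥ 2^{2f_k} − 2πe/h_k² whenever i < k, one has Σᵢ pᵢ fᵢ − (w/2) Σⱼ qⱼ log₂(Σᵢ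 Aᵢⱼ 2^{2fᵢ}) ≤ ½ Σᵢ pᵢ log₂(2πe aᵢ) − (w/2) Σⱼ qⱼ log₂(2πe bⱼ); i.e., the point fᵢ* = ½log₂(2πe aᵢ) is optimal for this constrained maximization. -/
/-!
Put `Fᵢ = 2^(2fᵢ) / (2πe)`. The EPI constraints say that `F - a` is antitone, and after
taking natural logarithms the claim becomes `∑ pᵢ log (Fᵢ/aᵢ) ≤ w ∑ⱼ qⱼ log ((∑ᵢ Aᵢⱼ Fᵢ)/bⱼ)`.
Jensen's inequality for `log` in column `j`, with the weights `Aᵢⱼ aᵢ / bⱼ`, bounds the right side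
from below by `w ∑ᵢ ρᵢ aᵢ log (Fᵢ/aᵢ)` with `ρᵢ = ∑ⱼ qⱼ Aᵢⱼ / bⱼ`. Concavity of `log` also makes
`aᵢ log (Fᵢ/aᵢ)` antitone in `i`, while the majorization and balance conditions say that the
partial sums of `pᵢ/aᵢ` stay below those of `w ρᵢ`, with equal totals; Abel summation concludes.
-/

open Finset Real

theorem Fin.sum_mul_le_mul_sum_of_antitone : ∀ {n : ℕ} {τ d : Fin (n + 1) → ℝ}, Antitone τ →
    (∀ k, ∑ i ∈ Iic k, d i ≤ 0) → ∑ i, τ i * d i ≤ τ (Fin.last n) * ∑ i, d i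
  | 0, τ, d, _, _ => by simp
  | n + 1, τ, d, hτ, hd => by
    have ih := Fin.sum_mul_le_mul_sum_of_antitone (τ := τ ∘ Fin.castSucc) (d := d ∘ Fin.castSucc)
      (hτ.comp_monotone Fin.strictMono_castSucc.monotone) fun k => by
        simpa only [Function.comp_apply, ← Fin.sum_Iic_castSucc] using hd k.castSucc
    have hD : ∑ i : Fin (n + 1), d i.castSucc ≤ 0 := by
      simpa [Fin.sum_Iic_castSucc, ← Fin.top_eq_last, Finset.Iic_top] using hd (Fin.last n).castSucc
    have hτ_last : τ (Fin.last (n + 1)) ≤ τ (Fin.last n).castSucc := hτ (Fin.le_last _)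
    simp only [Function.comp_apply] at ih
    rw [Fin.sum_univ_castSucc (f := fun i => τ i * d i), Fin.sum_univ_castSucc (f := d)]
    nlinarith

theorem sum_mul_log_le_mul_log_sum_div {ι : Type*} (s : Finset ι) {x z : ι → ℝ}
    (hx : ∀ i ∈ s, 0 ≤ x i) (hz : ∀ i ∈ s, 0 < z i) (hX : 0 < ∑ i ∈ s, x i) :
    ∑ i ∈ s, x i * log (z i) ≤ (∑ i ∈ s, x i) * log ((∑ i ∈ s, x i * z i) / ∑ i ∈ s, x i) := by
  set X := ∑ i ∈ s, x i
  have hJensen := strictConcaveOn_log_Ioi.concaveOn.le_map_sum (t := s) (w := fun i => x i / X)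
    (p := z) (fun i hi => div_nonneg (hx i hi) hX.le) (by rw [← sum_div, div_self hX.ne'])
    (fun i hi => hz i hi)
  simp only [smul_eq_mul, div_mul_eq_mul_div, ← sum_div] at hJensen
  rwa [div_le_iff₀' hX] at hJensen

theorem mul_log_div_le_mul_log_div {x y u v : ℝ} (hx : 0 < x) (hxy : x ≤ y) (hu : 0 < u)
    (huv : u - x ≤ v - y) : x * log (u / x) ≤ y * log (v / y) := by
  have hy : 0 < y := hx.trans_le hxy
  have hconc := strictConcaveOn_log_Ioi.concaveOn.2 (Set.mem_Ioi.2 one_pos)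
    (Set.mem_Ioi.2 (div_pos hu hx)) (sub_nonneg.2 (div_le_one_of_le₀ hxy hy.le))
    (div_nonneg hx.le hy.le) (sub_add_cancel 1 (x / y))
  have hmix : (1 - x / y) • (1 : ℝ) + (x / y) • (u / x) = (y - x + u) / y := by
    simp only [smul_eq_mul]; field_simp
  rw [hmix, smul_eq_mul, smul_eq_mul, log_one, mul_zero, zero_add] at hconc
  calc x * log (u / x) = y * (x / y * log (u / x)) := by field_simp
    _ ≤ y * log ((y - x + u) / y) := by gcongr
    _ ≤ y * log (v / y) := by gcongr; linarith

theorem sum_mul_pos_of_sum_eq_one {ι : Type*} {s : Finset ι} {μ x : ι → ℝ}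
    (hμ : ∀ i ∈ s, 0 ≤ μ i) (hμ1 : ∑ i ∈ s, μ i = 1) (hx : ∀ i ∈ s, 0 < x i) :
    0 < ∑ i ∈ s, μ i * x i := by
  obtain ⟨i, hi, hμi⟩ := exists_lt_of_sum_lt (s := s) (f := fun _ => (0 : ℝ)) (g := μ)
    (by simp [hμ1])
  exact sum_pos' (fun i hi => mul_nonneg (hμ i hi) (hx i hi).le) ⟨i, hi, mul_pos hμi (hx i hi)⟩

theorem Fin.sum_mul_le_sum_mul_of_antitone {n : ℕ} {τ u v : Fin (n + 1) → ℝ} (hτ : Antitone τ)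
    (hle : ∀ k, ∑ i ∈ Iic k, u i ≤ ∑ i ∈ Iic k, v i) (heq : ∑ i, u i = ∑ i, v i) :
    ∑ i, τ i * u i ≤ ∑ i, τ i * v i := by
  have h := Fin.sum_mul_le_mul_sum_of_antitone (d := u - v) hτ fun k => by
    simpa only [Pi.sub_apply, sum_sub_distrib, sub_nonpos] using hle k
  simpa only [Pi.sub_apply, mul_sub, sum_sub_distrib, heq, sub_self, mul_zero, sub_nonpos] using h

theorem sum_mul_log_div_le_of_sum_Iic_le {κ : Type*} [Fintype κ] {n : ℕ} {w : ℝ}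
    {a F p : Fin (n + 1) → ℝ} {b q : κ → ℝ} {A : Matrix (Fin (n + 1)) κ ℝ} (hw : 0 ≤ w)
    (ha : ∀ i, 0 < a i) (ha_anti : Antitone a) (hF : ∀ i, 0 < F i) (hFa : Antitone (F - a))
    (hq : ∀ j, 0 ≤ q j) (hA0 : ∀ i j, 0 ≤ A i j) (hAcol : ∀ j, ∑ i, A i j = 1)
    (hAa : ∀ j, ∑ i, A i j * a i = b j) (hbal : ∑ i, p i / a i = w * ∑ j, q j / b j)
    (hmaj : ∀ k, ∑ i ∈ Iic k, p i / a i ≤ w * ∑ j, (q j / b j) * ∑ i ∈ Iic k, A i j) :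
    ∑ i, p i * log (F i / a i) ≤ w * ∑ j, q j * log ((∑ i, A i j * F i) / b j) := by
  have hb : ∀ j, 0 < b j := fun j => by
    rw [← hAa j]; exact sum_mul_pos_of_sum_eq_one (fun i _ => hA0 i j) (hAcol j) fun i _ => ha i
  have hcolumn : ∀ j, ∑ i, A i j * a i * log (F i / a i) ≤ b j * log ((∑ i, A i j * F i) / b j) :=
    fun j => by
      have h := sum_mul_log_le_mul_log_sum_div univ (x := fun i => A i j * a i)
        (z := fun i => F i / a i) (fun i _ => mul_nonneg (hA0 i j) (ha i).le)
        (fun i _ => div_pos (hF i) (ha i)) (by rw [hAa j]; exact hb j)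
      simpa only [hAa j, mul_assoc, mul_div_cancel₀ _ (ha _).ne'] using h
  have hswap : ∀ s : Finset (Fin (n + 1)), ∑ i ∈ s, w * ∑ j, q j / b j * A i j =
      w * ∑ j, q j / b j * ∑ i ∈ s, A i j := fun s => by
    rw [← mul_sum, sum_comm]; simp only [mul_sum]
  have hτ : Antitone fun i => a i * log (F i / a i) := fun i k hik =>
    mul_log_div_le_mul_log_div (ha k) (ha_anti hik) (hF k) (hFa hik)
  have habel := Fin.sum_mul_le_sum_mul_of_antitone hτ (u := fun i => p i / a i)
    (v := fun i => w * ∑ j, q j / b j * A i j) (fun k => by simpa only [hswap] using hmaj k)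
    (by simp only [hswap, hAcol, mul_one, hbal])
  calc ∑ i, p i * log (F i / a i) = ∑ i, a i * log (F i / a i) * (p i / a i) :=
        sum_congr rfl fun i _ => by have := (ha i).ne'; field_simp
    _ ≤ ∑ i, a i * log (F i / a i) * (w * ∑ j, q j / b j * A i j) := habel
    _ = w * ∑ j, q j / b j * ∑ i, A i j * a i * log (F i / a i) := by
        simp only [mul_sum]; rw [sum_comm]; exact sum_congr rfl fun j _ => sum_congr rfl fun i _ => by ring
    _ ≤ w * ∑ j, q j / b j * (b j * log ((∑ i, A i j * F i) / b j)) := by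
        gcongr with j
        · exact div_nonneg (hq j) (hb j).le
        · exact hcolumn j
    _ = w * ∑ j, q j * log ((∑ i, A i j * F i) / b j) := by
        congr 1; exact sum_congr rfl fun j _ => by have := (hb j).ne'; field_simp

theorem stmt0_general (n m : ℕ) (w Qstar : ℝ) (hw : 1 ≤ w)
    (hQs0 : 0 ≤ Qstar)
    (h : Fin (n + 1) → ℝ)
    (hh0 : ∀ i, 0 < h i) (hhmono : StrictMono h)
    (p : Fin (n + 1) → ℝ) (q : Fin (m + 1) → ℝ)
    (hq : ∀ j, 0 < q j)
    (a : Fin (n + 1) → ℝ) (b : Fin (m + 1) → ℝ)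
    (ha : ∀ i, a i = Qstar + 1 / (h i) ^ 2)
    (hbal : ∑ i, p i / a i = w * ∑ j, q j / b j)
    (A : Matrix (Fin (n + 1)) (Fin (m + 1)) ℝ)
    (hA0 : ∀ i j, 0 ≤ A i j)
    (hAcol : ∀ j, ∑ i, A i j = 1)
    (hAa : ∀ j, ∑ i, A i j * a i = b j)
    (hmaj : ∀ k : Fin (n + 1), ∑ i ∈ Finset.Iic k, p i / a i ≤
      w * ∑ j, (q j / b j) * ∑ i ∈ Finset.Iic k, A i j)
    (f : Fin (n + 1) → ℝ)
    (hEPI : ∀ i k : Fin (n + 1), i < k →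
      (2 : ℝ) ^ (2 * f i) - 2 * Real.pi * Real.exp 1 / (h i) ^ 2 ≥
      (2 : ℝ) ^ (2 * f k) - 2 * Real.pi * Real.exp 1 / (h k) ^ 2) :
    ∑ i, p i * f i - (w / 2) * ∑ j, q j * Real.logb 2 (∑ i, A i j * (2 : ℝ) ^ (2 * f i)) ≤
      (1 / 2) * ∑ i, p i * Real.logb 2 (2 * Real.pi * Real.exp 1 * a i) -
      (w / 2) * ∑ j, q j * Real.logb 2 (2 * Real.pi * Real.exp 1 * b j) := by
  set c := 2 * π * exp 1
  have hc : 0 < c := by positivity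
  have ha_pos : ∀ i, 0 < a i := fun i => by rw [ha]; have := hh0 i; positivity
  have ha_anti : Antitone a := fun i k hik => by
    rw [ha, ha]; have := hh0 i; gcongr; exact hhmono.monotone hik
  set F := fun i => (2 : ℝ) ^ (2 * f i) / c
  have hFa : Antitone (F - a) := fun i k hik => by
    have hsub : ∀ i, (F - a) i = ((2 : ℝ) ^ (2 * f i) - c / h i ^ 2) / c - Qstar := fun i => by
      have := (hh0 i).ne'; simp only [Pi.sub_apply, F, ha]; field_simp; ring
    rcases hik.lt_or_eq with hik | rfl
    · rw [hsub, hsub]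
      exact sub_le_sub_right (div_le_div_of_nonneg_right (hEPI i k hik) hc.le) _
    · rfl
  have key := sum_mul_log_div_le_of_sum_Iic_le (F := F) (by linarith) ha_pos ha_anti
    (fun i => by positivity) hFa (fun j => (hq j).le) hA0 hAcol hAa hbal hmaj
  have hS : ∀ j, 0 < ∑ i, A i j * (2 : ℝ) ^ (2 * f i) := fun j =>
    sum_mul_pos_of_sum_eq_one (fun i _ => hA0 i j) (hAcol j) fun i _ => by positivity
  have hb : ∀ j, 0 < b j := fun j => by
    rw [← hAa j]; exact sum_mul_pos_of_sum_eq_one (fun i _ => hA0 i j) (hAcol j) fun i _ => ha_pos i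
  have hlogF : ∀ i, log (F i / a i) = 2 * f i * log 2 - log (c * a i) := fun i => by
    rw [div_div, log_div (by positivity) (by have := ha_pos i; positivity), log_rpow two_pos]
  have hlogS : ∀ j, log ((∑ i, A i j * F i) / b j) =
      log (∑ i, A i j * (2 : ℝ) ^ (2 * f i)) - log (c * b j) := fun j => by
    simp only [F, mul_div_assoc', ← sum_div]
    rw [div_div, log_div (hS j).ne' (by have := hb j; positivity)]
  simp only [hlogF, hlogS, mul_sub, sum_sub_distrib] at key
  rw [show ∑ i, p i * (2 * f i * log 2) = (∑ i, p i * f i) * 2 * log 2 by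
    rw [sum_mul, sum_mul]; exact sum_congr rfl fun i _ => by ring] at key
  have hL : 0 < log 2 := log_pos one_lt_two
  simp only [logb, mul_div_assoc', ← sum_div]
  field_simp
  linarith

/-- Optimization core of Case 1 of Theorem 1: under the balance condition
`∑ pᵢ/aᵢ = w ∑ qⱼ/bⱼ` with `aᵢ = Q* + 1/hᵢ²`, `bⱼ = Q* + 1/gⱼ²`, and given a
nonnegative matrix `A` whose columns sum to `1`, mix the `aᵢ` into the `bⱼ`, and
satisfy the majorization requirement, the point `fᵢ* = ½ log₂(2πe aᵢ)` is optimal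
for the constrained maximization problem (opt2). Logs are base 2. -/
theorem stmt0 (n m : ℕ) (Q w Qstar : ℝ) (hQ : 0 < Q) (hw : 1 ≤ w)
    (hQs0 : 0 ≤ Qstar) (hQsQ : Qstar ≤ Q)
    (h : Fin (n + 1) → ℝ) (g : Fin (m + 1) → ℝ)
    (hh0 : ∀ i, 0 < h i) (hhmono : StrictMono h)
    (hg0 : ∀ j, 0 < g j) (hgmono : StrictMono g)
    (p : Fin (n + 1) → ℝ) (q : Fin (m + 1) → ℝ)
    (hp : ∀ i, 0 < p i) (hpsum : ∑ i, p i = 1)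
    (hq : ∀ j, 0 < q j) (hqsum : ∑ j, q j = 1)
    (a : Fin (n + 1) → ℝ) (b : Fin (m + 1) → ℝ)
    (ha : ∀ i, a i = Qstar + 1 / (h i) ^ 2)
    (hb : ∀ j, b j = Qstar + 1 / (g j) ^ 2)
    (hbal : ∑ i, p i / a i = w * ∑ j, q j / b j)
    (A : Matrix (Fin (n + 1)) (Fin (m + 1)) ℝ)
    (hA0 : ∀ i j, 0 ≤ A i j)
    (hAcol : ∀ j, ∑ i, A i j = 1)
    (hAa : ∀ j, ∑ i, A i j * a i = b j)
    (hmaj : ∀ k : Fin (n + 1), ∑ i ∈ Finset.Iic k, p i / a i ≤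
      w * ∑ j, (q j / b j) * ∑ i ∈ Finset.Iic k, A i j)
    (f : Fin (n + 1) → ℝ)
    (hfn : f (Fin.last n) ≥
      (1 / 2) * Real.logb 2 (2 * Real.pi * Real.exp 1 / (h (Fin.last n)) ^ 2))
    (hf1 : f 0 ≤ (1 / 2) * Real.logb 2 (2 * Real.pi * Real.exp 1 * (Q + 1 / (h 0) ^ 2)))
    (hEPI : ∀ i k : Fin (n + 1), i < k →
      (2 : ℝ) ^ (2 * f i) - 2 * Real.pi * Real.exp 1 / (h i) ^ 2 ≥
      (2 : ℝ) ^ (2 * f k) - 2 * Real.pi * Real.exp 1 / (h k) ^ 2) :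
    ∑ i, p i * f i - (w / 2) * ∑ j, q j * Real.logb 2 (∑ i, A i j * (2 : ℝ) ^ (2 * f i)) ≤
      (1 / 2) * ∑ i, p i * Real.logb 2 (2 * Real.pi * Real.exp 1 * a i) -
      (w / 2) * ∑ j, q j * Real.logb 2 (2 * Real.pi * Real.exp 1 * b j) :=
  stmt0_general n m w Qstar hw hQs0 h hh0 hhmono p q hq a b ha hbal A hA0 hAcol hAa hmaj f hEPI
end

section
/- Let n,m be positive integers, Q > 0, w ≥ 1. Let 0 < h₁ < ⋯ < hₙ and 0 < g₁ < ⋯ < g_m, let p ∈ ℝⁿ and q ∈ ℝᵐ be probability vectors with positive entries, and set aᵢ = Q + 1/hᵢ², bⱼ = Q + 1/gⱼ². Assume Σᵢ pᵢ/aᵢ > w Σⱼ qⱼ/bⱼ. Suppose A is an n×m matrix with nonnegative entries such that (i) each column of A sums to 1, (ii) Σᵢ Aᵢⱼ aᵢ = bⱼ for every j, and (iii) for every k ∈ {1,…,n}, Σ_{i=k}^n pᵢ/aᵢ ≥ w Σⱼ (qⱼ/bⱼ)(Σ_{i=k}^n Aᵢⱼ). Then for every f ∈ ℝⁿ satisfying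 fₙ ≥ ½log₂(2πe/hₙ²), f₁ ≤ ½log₂(2πe(Q + 1/h₁²)), and 2^{2fᵢ} − 2πe/hᵢ² ≥ 2^{2f_k} − 2πe/h_k² whenever i < k, one has Σᵢ pᵢ fᵢ − (w/2) Σⱼ qⱼ log₂(Σᵢ Aᵢⱼ 2^{2fᵢ}) ≤ ½ Σᵢ pᵢ log₂(2πe aᵢ) − (w/2) Σⱼ qⱼ log₂(2πe bⱼ); i.e., the point fᵢ* = ½log₂(2πe aᵢ) is optimal for this constrained maximization. -/
/-!
Put `xᵢ = 2^{2fᵢ} / (2πe)`. Up to the factor `1 / (2 log 2)` the claim reads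
`∑ pᵢ log (xᵢ/aᵢ) ≤ w ∑ qⱼ log (∑ Aᵢⱼ xᵢ / bⱼ)`. For each `j` the weights `Aᵢⱼ aᵢ / bⱼ` sum to one,
so concavity of `log` gives `log (∑ Aᵢⱼ xᵢ / bⱼ) ≥ ∑ (Aᵢⱼ aᵢ / bⱼ) log (xᵢ/aᵢ)`. What remains is
`∑ Eᵢ Vᵢ ≤ 0` with `Eᵢ = pᵢ/aᵢ - w ∑ (qⱼ/bⱼ) Aᵢⱼ` and `Vᵢ = aᵢ log (xᵢ/aᵢ)`. The suffix sums of `E`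
are nonnegative (majorization), and `V` is antitone and nonpositive: `aᵢ` and `xᵢ - aᵢ` decrease
(the latter is the EPI constraint), `a ↦ a log (1 + s/a)` increases, and `x₀ ≤ a₀`. Abel summation
finishes the proof.
-/

open Finset Real

theorem Finset.sum_mul_nonpos_of_forall_sum_filter_le_nonneg {α R : Type*} [LinearOrder α]
    [CommRing R] [LinearOrder R] [IsStrictOrderedRing R]
    (s : Finset α) {E V : α → R} (hE : ∀ k ∈ s, 0 ≤ ∑ i ∈ s with k ≤ i, E i)
    (hV : AntitoneOn V s) (hV0 : ∀ i ∈ s, V i ≤ 0) : ∑ i ∈ s, E i * V i ≤ 0 := by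
  classical
  induction s using Finset.induction_on_min generalizing V with
  | empty => simp
  | insert a s has ih =>
    have ha : a ∉ s := fun h => lt_irrefl a (has a h)
    have hsuffix : ∀ k ∈ s, ∑ i ∈ insert a s with k ≤ i, E i = ∑ i ∈ s with k ≤ i, E i :=
      fun k hk => by rw [filter_insert, if_neg (not_le.2 (has k hk))]
    have htotal : ∑ i ∈ insert a s with a ≤ i, E i = ∑ i ∈ insert a s, E i := by
      refine sum_congr (filter_true_of_mem fun i hi => ?_) fun _ _ => rfl
      rcases mem_insert.1 hi with rfl | hi
      exacts [le_rfl, (has i hi).le]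
    have hshift : ∑ i ∈ s, E i * (V i - V a) ≤ 0 :=
      ih (fun k hk => hsuffix k hk ▸ hE k (mem_insert_of_mem hk))
        (fun i hi k hk hik =>
          sub_le_sub_right (hV (mem_insert_of_mem hi) (mem_insert_of_mem hk) hik) _)
        (fun i hi => sub_nonpos.2 (hV (mem_insert_self a s) (mem_insert_of_mem hi) (has i hi).le))
    have hhead : (∑ i ∈ insert a s, E i) * V a ≤ 0 :=
      mul_nonpos_of_nonneg_of_nonpos (htotal ▸ hE a (mem_insert_self a s))
        (hV0 a (mem_insert_self a s))
    calc ∑ i ∈ insert a s, E i * V i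
        = (∑ i ∈ insert a s, E i) * V a + ∑ i ∈ s, E i * (V i - V a) := by
          simp only [sum_insert ha, add_mul, sum_mul, mul_sub, sum_sub_distrib]; ring
      _ ≤ 0 := add_nonpos hhead hshift

theorem Finset.sum_mul_pos_of_sum_mul_pos {ι : Type*} {s : Finset ι} {c a x : ι → ℝ}
    (hc : ∀ i ∈ s, 0 ≤ c i) (hx : ∀ i ∈ s, 0 < x i) (hca : 0 < ∑ i ∈ s, c i * a i) :
    0 < ∑ i ∈ s, c i * x i := by
  have hprod : ∃ i ∈ s, 0 < c i * a i := by
    by_contra! hnon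
    exact hca.not_ge (sum_nonpos hnon)
  obtain ⟨i, hi, hcai⟩ := hprod
  exact sum_pos' (fun i hi => mul_nonneg (hc i hi) (hx i hi).le)
    ⟨i, hi, mul_pos ((hc i hi).lt_of_ne' (left_ne_zero_of_mul hcai.ne')) (hx i hi)⟩

theorem Real.sum_mul_log_div_le_log_sum_mul_div {ι : Type*} (s : Finset ι) {c a x : ι → ℝ}
    {b : ℝ} (hc : ∀ i ∈ s, 0 ≤ c i) (ha : ∀ i ∈ s, 0 < a i) (hx : ∀ i ∈ s, 0 < x i)
    (hb : 0 < b) (hcab : ∑ i ∈ s, c i * a i = b) :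
    ∑ i ∈ s, c i * a i / b * log (x i / a i) ≤ log ((∑ i ∈ s, c i * x i) / b) := by
  have hmean : ∑ i ∈ s, c i * a i / b * (x i / a i) = (∑ i ∈ s, c i * x i) / b := by
    rw [sum_div]
    refine sum_congr rfl fun i hi => ?_
    field_simp [(ha i hi).ne']
  rw [← hmean]
  exact strictConcaveOn_log_Ioi.concaveOn.le_map_sum
    (fun i hi => div_nonneg (mul_nonneg (hc i hi) (ha i hi).le) hb.le)
    (by rw [← sum_div, hcab, div_self hb.ne'])
    (fun i hi => div_pos (hx i hi) (ha i hi))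

theorem Real.mul_log_div_le_mul_log_div {a a' x x' : ℝ} (ha' : 0 < a') (hx' : 0 < x')
    (haa : a' ≤ a) (hxa : x' - a' ≤ x - a) : a' * log (x' / a') ≤ a * log (x / a) := by
  have ha : 0 < a := ha'.trans_le haa
  -- concavity of `log` between the points `x'/a'` and `1`, with weights `a'/a` and `1 - a'/a`
  have hconc := strictConcaveOn_log_Ioi.concaveOn.2 (Set.mem_Ioi.2 (div_pos hx' ha'))
    (Set.mem_Ioi.2 one_pos) (div_pos ha' ha).le (sub_nonneg.2 ((div_le_one ha).2 haa))
    (add_sub_cancel _ _)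
  have hmix : a' / a * (x' / a') + (1 - a' / a) * 1 = (x' + a - a') / a := by
    field_simp; ring
  simp only [smul_eq_mul, log_one, mul_zero, add_zero, hmix] at hconc
  calc a' * log (x' / a') = a * (a' / a * log (x' / a')) := by field_simp
    _ ≤ a * log ((x' + a - a') / a) := mul_le_mul_of_nonneg_left hconc ha.le
    _ ≤ a * log (x / a) := by
        gcongr
        · exact div_pos (by linarith) ha
        · linarith

theorem Real.log_div_div_eq_logb_sub_logb_mul {b x y z : ℝ} (hb : log b ≠ 0) (hx : x ≠ 0)
    (hyz : y * z ≠ 0) : log (x / y / z) = (logb b x - logb b (y * z)) * log b := by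
  rw [div_div, log_div hx hyz, sub_mul, logb, logb, div_mul_cancel₀ _ hb, div_mul_cancel₀ _ hb]

section Majorization

variable {ι κ : Type*} [Fintype ι] [LinearOrder ι] [LocallyFiniteOrderTop ι] [OrderBot ι]
  [Fintype κ] {p a : ι → ℝ} {q b : κ → ℝ} {A : ι → κ → ℝ} {w : ℝ}

theorem sum_mul_log_div_le_of_majorization {x : ι → ℝ} (hw : 0 ≤ w) (hq : ∀ j, 0 ≤ q j)
    (hA : ∀ i j, 0 ≤ A i j) (ha : ∀ i, 0 < a i) (hb : ∀ j, 0 < b j)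
    (hAa : ∀ j, ∑ i, A i j * a i = b j)
    (hmaj : ∀ k, w * ∑ j, q j / b j * ∑ i ∈ Ici k, A i j ≤ ∑ i ∈ Ici k, p i / a i)
    (hx : ∀ i, 0 < x i) (ha_anti : Antitone a) (hxa_anti : Antitone (x - a))
    (hx_bot : x ⊥ ≤ a ⊥) :
    ∑ i, p i * log (x i / a i) ≤ w * ∑ j, q j * log ((∑ i, A i j * x i) / b j) := by
  set ℓ : ι → ℝ := fun i => log (x i / a i)
  set E : ι → ℝ := fun i => p i / a i - w * ∑ j, q j / b j * A i j
  have hsplit : ∀ i,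
      p i * ℓ i = E i * (a i * ℓ i) + w * ∑ j, q j * (A i j * a i / b j * ℓ i) := by
    intro i
    have hmix : w * ∑ j, q j * (A i j * a i / b j * ℓ i) =
        (w * ∑ j, q j / b j * A i j) * (a i * ℓ i) := by
      rw [mul_assoc, sum_mul]
      exact congrArg _ (sum_congr rfl fun j _ => by ring)
    rw [hmix, sub_mul, sub_add_cancel, div_mul_eq_mul_div, mul_div_assoc,
      mul_div_cancel_left₀ _ (ha i).ne']
  have hE : ∀ k ∈ univ, 0 ≤ ∑ i ∈ univ with k ≤ i, E i := by
    intro k _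
    rw [filter_le_eq_Ici, sum_sub_distrib, ← mul_sum, sum_comm]
    simp only [← mul_sum]
    linarith [hmaj k]
  have hV : Antitone fun i => a i * ℓ i := fun i k hik =>
    mul_log_div_le_mul_log_div (ha k) (hx k) (ha_anti hik) (hxa_anti hik)
  have hV_bot : a ⊥ * ℓ ⊥ ≤ 0 :=
    mul_nonpos_of_nonneg_of_nonpos (ha ⊥).le
      (log_nonpos (div_pos (hx ⊥) (ha ⊥)).le ((div_le_one (ha ⊥)).2 hx_bot))
  calc ∑ i, p i * ℓ i
      = ∑ i, E i * (a i * ℓ i) + w * ∑ j, q j * ∑ i, A i j * a i / b j * ℓ i := by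
        rw [sum_congr rfl fun i _ => hsplit i, sum_add_distrib, ← mul_sum, sum_comm]
        simp only [mul_sum]
    _ ≤ 0 + w * ∑ j, q j * log ((∑ i, A i j * x i) / b j) := by
        gcongr with j
        · exact univ.sum_mul_nonpos_of_forall_sum_filter_le_nonneg hE (hV.antitoneOn _)
            fun i _ => (hV bot_le).trans hV_bot
        · exact hq j
        · exact sum_mul_log_div_le_log_sum_mul_div univ (fun i _ => hA i j) (fun i _ => ha i)
            (fun i _ => hx i) (hb j) (hAa j)
    _ = w * ∑ j, q j * log ((∑ i, A i j * x i) / b j) := zero_add _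

theorem sum_mul_sub_mul_sum_logb_le_of_majorization {f : ι → ℝ} {c : ℝ} (hc : 0 < c)
    (hw : 0 ≤ w) (hq : ∀ j, 0 ≤ q j) (hA : ∀ i j, 0 ≤ A i j) (ha : ∀ i, 0 < a i)
    (hb : ∀ j, 0 < b j) (hAa : ∀ j, ∑ i, A i j * a i = b j)
    (hmaj : ∀ k, w * ∑ j, q j / b j * ∑ i ∈ Ici k, A i j ≤ ∑ i ∈ Ici k, p i / a i)
    (ha_anti : Antitone a) (hxa_anti : Antitone ((fun i => (2 : ℝ) ^ (2 * f i) / c) - a))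
    (hx_bot : (2 : ℝ) ^ (2 * f ⊥) / c ≤ a ⊥) :
    ∑ i, p i * f i - (w / 2) * ∑ j, q j * logb 2 (∑ i, A i j * (2 : ℝ) ^ (2 * f i)) ≤
      (1 / 2) * ∑ i, p i * logb 2 (c * a i) - (w / 2) * ∑ j, q j * logb 2 (c * b j) := by
  have hlog2 : log 2 ≠ 0 := (log_pos one_lt_two).ne'
  have hT : ∀ i, 0 < (2 : ℝ) ^ (2 * f i) := fun i => by positivity
  have key := sum_mul_log_div_le_of_majorization hw hq hA ha hb hAa hmaj
    (fun i => div_pos (hT i) hc) ha_anti hxa_anti hx_bot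
  have hrow : ∀ i, log ((2 : ℝ) ^ (2 * f i) / c / a i) =
      (2 * f i - logb 2 (c * a i)) * log 2 := fun i => by
    rw [log_div_div_eq_logb_sub_logb_mul hlog2 (hT i).ne' (mul_pos hc (ha i)).ne',
      logb_rpow two_pos (by norm_num)]
  have hcol : ∀ j, log ((∑ i, A i j * ((2 : ℝ) ^ (2 * f i) / c)) / b j) =
      (logb 2 (∑ i, A i j * (2 : ℝ) ^ (2 * f i)) - logb 2 (c * b j)) * log 2 := fun j => by
    have hS : 0 < ∑ i, A i j * (2 : ℝ) ^ (2 * f i) :=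
      sum_mul_pos_of_sum_mul_pos (fun i _ => hA i j) (fun i _ => hT i) (hAa j ▸ hb j)
    simp only [mul_div_assoc', ← sum_div]
    exact log_div_div_eq_logb_sub_logb_mul hlog2 hS.ne' (mul_pos hc (hb j)).ne'
  simp only [hrow, hcol, ← mul_assoc, ← sum_mul] at key
  have key' := le_of_mul_le_mul_right key (log_pos one_lt_two)
  simp only [mul_sub, sum_sub_distrib, mul_left_comm _ (2 : ℝ), ← mul_sum] at key'
  linarith

end Majorization

theorem stmt1_general (n m : ℕ) (Q w : ℝ) (hQ : 0 < Q) (hw : 1 ≤ w)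
    (h : Fin (n + 1) → ℝ) (g : Fin (m + 1) → ℝ)
    (hh0 : ∀ i, 0 < h i) (hhmono : StrictMono h)
    (p : Fin (n + 1) → ℝ) (q : Fin (m + 1) → ℝ)
    (hq : ∀ j, 0 < q j)
    (a : Fin (n + 1) → ℝ) (b : Fin (m + 1) → ℝ)
    (ha : ∀ i, a i = Q + 1 / (h i) ^ 2)
    (hb : ∀ j, b j = Q + 1 / (g j) ^ 2)
    (A : Matrix (Fin (n + 1)) (Fin (m + 1)) ℝ)
    (hA0 : ∀ i j, 0 ≤ A i j)
    (hAa : ∀ j, ∑ i, A i j * a i = b j)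
    (hmaj : ∀ k : Fin (n + 1), ∑ i ∈ Finset.Ici k, p i / a i ≥
      w * ∑ j, (q j / b j) * ∑ i ∈ Finset.Ici k, A i j)
    (f : Fin (n + 1) → ℝ)
    (hf1 : f 0 ≤ (1 / 2) * Real.logb 2 (2 * Real.pi * Real.exp 1 * (Q + 1 / (h 0) ^ 2)))
    (hEPI : ∀ i k : Fin (n + 1), i < k →
      (2 : ℝ) ^ (2 * f i) - 2 * Real.pi * Real.exp 1 / (h i) ^ 2 ≥
      (2 : ℝ) ^ (2 * f k) - 2 * Real.pi * Real.exp 1 / (h k) ^ 2) :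
    ∑ i, p i * f i - (w / 2) * ∑ j, q j * Real.logb 2 (∑ i, A i j * (2 : ℝ) ^ (2 * f i)) ≤
      (1 / 2) * ∑ i, p i * Real.logb 2 (2 * Real.pi * Real.exp 1 * a i) -
      (w / 2) * ∑ j, q j * Real.logb 2 (2 * Real.pi * Real.exp 1 * b j) := by
  set c := 2 * π * exp 1
  have hc : 0 < c := by positivity
  have ha0 : ∀ i, 0 < a i := fun i => by rw [ha i]; positivity
  have ha_anti : Antitone a := fun i k hik => by
    rw [ha i, ha k]
    have := hh0 i
    gcongr
    exact hhmono.monotone hik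
  have hxa_anti : Antitone ((fun i => (2 : ℝ) ^ (2 * f i) / c) - a) := by
    intro i k hik
    rcases hik.eq_or_lt with rfl | hlt
    · exact le_rfl
    have hepi := div_le_div_of_nonneg_right (hEPI i k hlt) hc.le
    simp only [Pi.sub_apply, ha, sub_div, div_div_cancel_left' hc.ne', one_div] at hepi ⊢
    linarith
  have hx_bot : (2 : ℝ) ^ (2 * f ⊥) / c ≤ a ⊥ := by
    rw [bot_eq_zero, div_le_iff₀ hc, mul_comm (a 0),
      ← rpow_logb two_pos (by norm_num) (mul_pos hc (ha0 0))]
    exact rpow_le_rpow_of_exponent_le one_le_two (by rw [ha 0]; linarith)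
  exact sum_mul_sub_mul_sum_logb_le_of_majorization hc (by linarith) (fun j => (hq j).le) hA0 ha0
    (fun j => by rw [hb j]; positivity) hAa hmaj ha_anti hxa_anti hx_bot

/-- Optimization core of Case 2 of Theorem 1 (the case `r(w,Q) > 0`): with
`aᵢ = Q + 1/hᵢ²`, `bⱼ = Q + 1/gⱼ²`, `∑ pᵢ/aᵢ > w ∑ qⱼ/bⱼ`, and a nonnegative
matrix `A` whose columns sum to `1`, mix the `aᵢ` into the `bⱼ`, and satisfy the
(suffix-sum) majorization requirement, the point `fᵢ* = ½ log₂(2πe aᵢ)` is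
optimal for the constrained maximization problem (opt2). Logs are base 2. -/
theorem stmt1 (n m : ℕ) (Q w : ℝ) (hQ : 0 < Q) (hw : 1 ≤ w)
    (h : Fin (n + 1) → ℝ) (g : Fin (m + 1) → ℝ)
    (hh0 : ∀ i, 0 < h i) (hhmono : StrictMono h)
    (hg0 : ∀ j, 0 < g j) (hgmono : StrictMono g)
    (p : Fin (n + 1) → ℝ) (q : Fin (m + 1) → ℝ)
    (hp : ∀ i, 0 < p i) (hpsum : ∑ i, p i = 1)
    (hq : ∀ j, 0 < q j) (hqsum : ∑ j, q j = 1)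
    (a : Fin (n + 1) → ℝ) (b : Fin (m + 1) → ℝ)
    (ha : ∀ i, a i = Q + 1 / (h i) ^ 2)
    (hb : ∀ j, b j = Q + 1 / (g j) ^ 2)
    (hbal : ∑ i, p i / a i > w * ∑ j, q j / b j)
    (A : Matrix (Fin (n + 1)) (Fin (m + 1)) ℝ)
    (hA0 : ∀ i j, 0 ≤ A i j)
    (hAcol : ∀ j, ∑ i, A i j = 1)
    (hAa : ∀ j, ∑ i, A i j * a i = b j)
    (hmaj : ∀ k : Fin (n + 1), ∑ i ∈ Finset.Ici k, p i / a i ≥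
      w * ∑ j, (q j / b j) * ∑ i ∈ Finset.Ici k, A i j)
    (f : Fin (n + 1) → ℝ)
    (hfn : f (Fin.last n) ≥
      (1 / 2) * Real.logb 2 (2 * Real.pi * Real.exp 1 / (h (Fin.last n)) ^ 2))
    (hf1 : f 0 ≤ (1 / 2) * Real.logb 2 (2 * Real.pi * Real.exp 1 * (Q + 1 / (h 0) ^ 2)))
    (hEPI : ∀ i k : Fin (n + 1), i < k →
      (2 : ℝ) ^ (2 * f i) - 2 * Real.pi * Real.exp 1 / (h i) ^ 2 ≥
      (2 : ℝ) ^ (2 * f k) - 2 * Real.pi * Real.exp 1 / (h k) ^ 2) :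
    ∑ i, p i * f i - (w / 2) * ∑ j, q j * Real.logb 2 (∑ i, A i j * (2 : ℝ) ^ (2 * f i)) ≤
      (1 / 2) * ∑ i, p i * Real.logb 2 (2 * Real.pi * Real.exp 1 * a i) -
      (w / 2) * ∑ j, q j * Real.logb 2 (2 * Real.pi * Real.exp 1 * b j) :=
  stmt1_general n m Q w hQ hw h g hh0 hhmono p q hq a b ha hb A hA0 hAa hmaj f hf1 hEPI
end

section
/- Let n,m be positive integers, w > 0, let q₁,…,q_m be nonnegative reals, and let E be an n×m matrix with nonnegative entries each of whose columns sums to 1 (that is, Σ_{l=1}^n E_{lj} = 1 for every j). Define the symmetric n×n matrix H by H_{lk} = −2w Σⱼ qⱼ E_{lj} E_{kj} for l ≠ k, and H_{ll} = 2w Σⱼ qⱼ E_{lj} (Σ_{i≠l} E_{ij}) = 2w Σⱼ qⱼ E_{lj}(1 − E_{lj}). Then H is positive semidefinite, i.e., xᵀHx ≥ 0 for every x ∈ ℝⁿ. -/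
/-- Lemma 3 (lem:convex) of the paper: the matrix `H` with off-diagonal entries
`H l k = -2w ∑ⱼ qⱼ E l j * E k j` and diagonal entries
`H l l = 2w ∑ⱼ qⱼ E l j * (∑_{i ≠ l} E i j)`, where `E` is a nonnegative matrix
each of whose columns sums to `1`, is positive semidefinite. -/
theorem stmt3 (n m : ℕ) (w : ℝ) (hw : 0 < w)
    (q : Fin (m + 1) → ℝ) (hq : ∀ j, 0 ≤ q j)
    (E : Matrix (Fin (n + 1)) (Fin (m + 1)) ℝ)
    (hE : ∀ l j, 0 ≤ E l j)
    (hEcol : ∀ j, ∑ l, E l j = 1)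
    (H : Matrix (Fin (n + 1)) (Fin (n + 1)) ℝ)
    (hHoff : ∀ l k, l ≠ k → H l k = -2 * w * ∑ j, q j * E l j * E k j)
    (hHdiag : ∀ l, H l l = 2 * w * ∑ j, q j * E l j * ∑ i ∈ Finset.univ.erase l, E i j) :
    ∀ x : Fin (n + 1) → ℝ, 0 ≤ ∑ l, ∑ k, x l * H l k * x k := by
  intro x
  -- uniform description of H
  have hH : ∀ l k, H l k
      = ∑ j, 2 * w * (q j * (E l j * ((if l = k then (1:ℝ) else 0) - E k j))) := by
    intro l k
    by_cases h : l = k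
    · subst h
      rw [hHdiag l, Finset.mul_sum]
      refine Finset.sum_congr rfl fun j _ => ?_
      have herase : ∑ i ∈ Finset.univ.erase l, E i j = 1 - E l j := by
        have h1 := hEcol j
        rw [← Finset.add_sum_erase _ _ (Finset.mem_univ l)] at h1
        linarith
      rw [herase]
      simp only [eq_self_iff_true, if_true]
      ring
    · rw [hHoff l k h, Finset.mul_sum]
      refine Finset.sum_congr rfl fun j _ => ?_
      simp only [if_neg h]
      ring
  have key : ∑ l, ∑ k, x l * H l k * x k
      = ∑ j, 2 * w * (q j * ((∑ l, E l j * x l ^ 2) - (∑ l, E l j * x l) ^ 2)) := by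
    simp_rw [hH, Finset.mul_sum, Finset.sum_mul]
    conv_lhs => enter [2, l]; rw [Finset.sum_comm]
    rw [Finset.sum_comm]
    refine Finset.sum_congr rfl fun j _ => ?_
    have inner : ∀ l, ∑ k, x l * (2 * w * (q j * (E l j * ((if l = k then (1:ℝ) else 0) - E k j)))) * x k
        = 2 * w * (q j * (E l j * x l ^ 2 - E l j * x l * ∑ k, E k j * x k)) := by
      intro l
      have expand : ∀ k, x l * (2 * w * (q j * (E l j * ((if l = k then (1:ℝ) else 0) - E k j)))) * x k
          = 2 * w * (q j * (E l j * x l * ((if l = k then (1:ℝ) else 0) * x k)))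
            - 2 * w * (q j * (E l j * x l * (E k j * x k))) := by
        intro k; ring
      simp_rw [expand, Finset.sum_sub_distrib, ← Finset.mul_sum]
      have : ∑ k, (if l = k then (1:ℝ) else 0) * x k = x l := by
        simp [Finset.sum_ite_eq]
      rw [this]
      ring_nf
    simp_rw [inner]
    rw [← Finset.mul_sum, ← Finset.mul_sum, Finset.sum_sub_distrib, ← Finset.sum_mul, sq]
  rw [key]
  refine Finset.sum_nonneg fun j _ => ?_
  have hcs : (∑ l, E l j * x l) ^ 2 ≤ ∑ l, E l j * x l ^ 2 := by
    have h1 : (∑ l, Real.sqrt (E l j) * (Real.sqrt (E l j) * x l)) ^ 2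
        ≤ (∑ l, Real.sqrt (E l j) ^ 2) * ∑ l, (Real.sqrt (E l j) * x l) ^ 2 :=
      Finset.sum_mul_sq_le_sq_mul_sq _ _ _
    have hs : ∀ l, Real.sqrt (E l j) ^ 2 = E l j := fun l => Real.sq_sqrt (hE l j)
    have e1 : ∀ l, Real.sqrt (E l j) * (Real.sqrt (E l j) * x l) = E l j * x l := by
      intro l; rw [← mul_assoc, ← sq, hs]
    have e2 : ∀ l, (Real.sqrt (E l j) * x l) ^ 2 = E l j * x l ^ 2 := by
      intro l; rw [mul_pow, hs]
    simp_rw [e1, e2, hs] at h1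
    rwa [hEcol j, one_mul] at h1
  have hsub : 0 ≤ (∑ l, E l j * x l ^ 2) - (∑ l, E l j * x l) ^ 2 := by linarith
  exact mul_nonneg (by linarith) (mul_nonneg (hq j) hsub)
end

section
/- Let n,m be positive integers and let E be an n×m matrix with nonnegative entries. Fix i ∈ {1,…,n} and j ∈ {1,…,m}, and define the n×n matrix ME^{ij} by: (ME^{ij})_{ii} = Σ_{t≠i} E_{tj}; (ME^{ij})_{ll} = E_{lj} for l ≠ i; (ME^{ij})_{li} = (ME^{ij})_{il} = −E_{lj} for l ≠ i; and all other entries zero. Then for every x ∈ ℝⁿ, xᵀ ME^{ij} x = Σ_{t≠i} E_{tj}(x_t − x_i)² ≥ 0; in particular ME^{ij} is positive semidefinite. Moreover, if additionally each column of E sums to 1, w > 0 and q₁,…,q_m ≥ 0, then the matrix H defined by H_{lk} = −2w Σⱼ qⱼ E_{lj}E_{kj} (l ≠ k) and H_{ll} = 2w Σⱼ qⱼ E_{lj}(1 − E_{lj}) satisfies H = w Σⱼ qⱼ Σᵢ E_{ij} ME^{ij}. -/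
/-- The two key steps in the proof of Lemma 3 (lem:convex): (a) for each `i, j` the
matrix `ME i j` (with `(ME i j) i i = ∑_{t≠i} E t j`, `(ME i j) l l = E l j` for
`l ≠ i`, `(ME i j) l i = (ME i j) i l = -E l j` for `l ≠ i`, and all other entries
zero) satisfies the quadratic-form identity
`xᵀ (ME i j) x = ∑_{t≠i} E t j (x t - x i)² ≥ 0`, hence is positive semidefinite;
(b) if moreover each column of `E` sums to `1`, `w > 0` and `q ≥ 0`, then the
Hessian-type matrix `H` decomposes as `H = w ∑ⱼ qⱼ ∑ᵢ E i j • ME i j`. -/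
theorem stmt4 (n m : ℕ)
    (E : Matrix (Fin (n + 1)) (Fin (m + 1)) ℝ)
    (hE : ∀ l j, 0 ≤ E l j)
    (ME : Fin (n + 1) → Fin (m + 1) → Matrix (Fin (n + 1)) (Fin (n + 1)) ℝ)
    (hMEii : ∀ i j, ME i j i i = ∑ t ∈ Finset.univ.erase i, E t j)
    (hMEll : ∀ i j l, l ≠ i → ME i j l l = E l j)
    (hMEli : ∀ i j l, l ≠ i → ME i j l i = -E l j)
    (hMEil : ∀ i j l, l ≠ i → ME i j i l = -E l j)
    (hMEzero : ∀ i j l k, l ≠ k → l ≠ i → k ≠ i → ME i j l k = 0) :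
    (∀ i j (x : Fin (n + 1) → ℝ),
      (∑ l, ∑ k, x l * ME i j l k * x k =
        ∑ t ∈ Finset.univ.erase i, E t j * (x t - x i) ^ 2) ∧
      0 ≤ ∑ l, ∑ k, x l * ME i j l k * x k) ∧
    (∀ (w : ℝ) (q : Fin (m + 1) → ℝ), 0 < w → (∀ j, 0 ≤ q j) →
      (∀ j, ∑ l, E l j = 1) →
      ∀ H : Matrix (Fin (n + 1)) (Fin (n + 1)) ℝ,
        (∀ l k, l ≠ k → H l k = -2 * w * ∑ j, q j * E l j * E k j) →
        (∀ l, H l l = 2 * w * ∑ j, q j * E l j * (1 - E l j)) →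
        H = w • ∑ j, q j • ∑ i, E i j • ME i j) := by
  have split : ∀ (i : Fin (n + 1)) (f : Fin (n + 1) → ℝ),
      ∑ l, f l = f i + ∑ l ∈ Finset.univ.erase i, f l := by
    intro i f
    exact (Finset.add_sum_erase _ f (Finset.mem_univ i)).symm
  have quad : ∀ i j (x : Fin (n + 1) → ℝ),
      ∑ l, ∑ k, x l * ME i j l k * x k =
        ∑ t ∈ Finset.univ.erase i, E t j * (x t - x i) ^ 2 := by
    intro i j x
    rw [split i]
    have h1 : ∑ k, x i * ME i j i k * x k
        = x i * (∑ t ∈ Finset.univ.erase i, E t j) * x i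
          + ∑ k ∈ Finset.univ.erase i, x i * (-E k j) * x k := by
      rw [split i]
      congr 1
      · rw [hMEii]
      · exact Finset.sum_congr rfl fun k hk => by
          rw [hMEil i j k (Finset.ne_of_mem_erase hk)]
    have h2 : ∀ l ∈ Finset.univ.erase i,
        ∑ k, x l * ME i j l k * x k
          = x l * (-E l j) * x i + x l * E l j * x l := by
      intro l hl
      have hl' : l ≠ i := Finset.ne_of_mem_erase hl
      rw [split i]
      congr 1
      · rw [hMEli i j l hl']
      · rw [Finset.sum_eq_single l
          (fun k hk hkl => by
            rw [hMEzero i j l k (Ne.symm hkl) hl' (Finset.ne_of_mem_erase hk)]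
            ring)
          (fun h => absurd (Finset.mem_erase.mpr ⟨hl', Finset.mem_univ l⟩) h)]
        rw [hMEll i j l hl']
    rw [h1, Finset.sum_congr rfl h2]
    rw [Finset.mul_sum, Finset.sum_mul, ← Finset.sum_add_distrib,
      ← Finset.sum_add_distrib]
    exact Finset.sum_congr rfl fun t _ => by ring
  constructor
  · intro i j x
    refine ⟨quad i j x, ?_⟩
    rw [quad i j x]
    exact Finset.sum_nonneg fun t _ => mul_nonneg (hE t j) (sq_nonneg _)
  · intro w q hw hq hcol H hHoff hHdiag
    have hsum : ∀ (l : Fin (n + 1)) j,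
        ∑ t ∈ Finset.univ.erase l, E t j = 1 - E l j := by
      intro l j
      have := hcol j
      rw [split l] at this
      linarith
    ext l k
    have hrhs : (w • ∑ j, q j • ∑ i, E i j • ME i j) l k
        = w * ∑ j, q j * ∑ i, E i j * ME i j l k := by
      simp [Matrix.sum_apply, Matrix.smul_apply, Finset.mul_sum, mul_assoc]
    rw [hrhs]
    by_cases hlk : l = k
    · subst hlk
      rw [hHdiag l]
      have : ∀ j, ∑ i, E i j * ME i j l l = 2 * (E l j * (1 - E l j)) := by
        intro j
        rw [split l]
        rw [hMEii l j, hsum l j]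
        have : ∑ i ∈ Finset.univ.erase l, E i j * ME i j l l
            = ∑ i ∈ Finset.univ.erase l, E i j * E l j :=
          Finset.sum_congr rfl fun i hi => by
            rw [hMEll i j l (Ne.symm (Finset.ne_of_mem_erase hi))]
        rw [this, ← Finset.sum_mul, hsum l j]
        ring
      simp_rw [this]
      rw [Finset.mul_sum, Finset.mul_sum]
      exact Finset.sum_congr rfl fun j _ => by ring
    · rw [hHoff l k hlk]
      have : ∀ j, ∑ i, E i j * ME i j l k = -(2 * (E l j * E k j)) := by
        intro j
        rw [split l]
        rw [hMEil l j k (Ne.symm hlk)]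
        have hk : k ∈ Finset.univ.erase l :=
          Finset.mem_erase.mpr ⟨Ne.symm hlk, Finset.mem_univ k⟩
        rw [Finset.sum_eq_single_of_mem k hk
          (fun i hi hik => by
            rw [hMEzero i j l k hlk (Ne.symm (Finset.ne_of_mem_erase hi)) (Ne.symm hik)]
            ring)]
        rw [hMEli k j l hlk]
        ring
      simp_rw [this]
      rw [Finset.mul_sum, Finset.mul_sum]
      exact Finset.sum_congr rfl fun j _ => by ring
end

section
/- Let n be a positive integer, Q > 0, and 0 < h₁ < ⋯ < hₙ. Suppose f ∈ ℝⁿ satisfies: fₙ ≥ ½log₂(2πe/hₙ²); f₁ ≤ ½log₂(2πe(Q + 1/h₁²)); and 2^{2fᵢ} − 2πe/hᵢ² ≥ 2^{2f_k} − 2πe/h_k² whenever i < k. Then for every i ∈ {1,…,n}: ½log₂(2πe/hᵢ²) ≤ fᵢ ≤ ½log₂(2πe(Q + 1/hᵢ²)). -/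
lemma aux_le (x g : ℝ) (hx : 0 < x) : x ≤ (2:ℝ)^(2*g) ↔ (1/2) * Real.logb 2 x ≤ g := by
  have h1 : x ≤ (2:ℝ)^(2*g) ↔ Real.logb 2 x ≤ 2*g :=
    (Real.logb_le_iff_le_rpow one_lt_two hx).symm
  rw [h1]; constructor <;> intro <;> linarith

lemma aux_ge (x g : ℝ) (hx : 0 < x) : (2:ℝ)^(2*g) ≤ x ↔ g ≤ (1/2) * Real.logb 2 x := by
  have h1 : (2:ℝ)^(2*g) ≤ x ↔ 2*g ≤ Real.logb 2 x :=
    (Real.le_logb_iff_rpow_le one_lt_two hx).symm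
  rw [h1]; constructor <;> intro <;> linarith

/-- Constraint 3 of problem (opt) — the individual bounds
`½log₂(2πe/hᵢ²) ≤ fᵢ ≤ ½log₂(2πe(Q + 1/hᵢ²))` — follows from only the boundary
constraints on `f₁` and `fₙ` together with the EPI-induced ordering constraint
that `2^{2fᵢ} − 2πe/hᵢ²` is nonincreasing in `i`. Logs are base 2. -/
theorem stmt5 (n : ℕ) (Q : ℝ) (hQ : 0 < Q)
    (h : Fin (n + 1) → ℝ) (hh0 : ∀ i, 0 < h i) (hhmono : StrictMono h)
    (f : Fin (n + 1) → ℝ)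
    (hfn : f (Fin.last n) ≥
      (1 / 2) * Real.logb 2 (2 * Real.pi * Real.exp 1 / (h (Fin.last n)) ^ 2))
    (hf1 : f 0 ≤ (1 / 2) * Real.logb 2 (2 * Real.pi * Real.exp 1 * (Q + 1 / (h 0) ^ 2)))
    (hEPI : ∀ i k : Fin (n + 1), i < k →
      (2 : ℝ) ^ (2 * f i) - 2 * Real.pi * Real.exp 1 / (h i) ^ 2 ≥
      (2 : ℝ) ^ (2 * f k) - 2 * Real.pi * Real.exp 1 / (h k) ^ 2) :
    ∀ i : Fin (n + 1),
      (1 / 2) * Real.logb 2 (2 * Real.pi * Real.exp 1 / (h i) ^ 2) ≤ f i ∧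
      f i ≤ (1 / 2) * Real.logb 2 (2 * Real.pi * Real.exp 1 * (Q + 1 / (h i) ^ 2)) := by
  set c : ℝ := 2 * Real.pi * Real.exp 1 with hc
  have hcpos : 0 < c := by positivity
  have hpos : ∀ i : Fin (n + 1), 0 < c / (h i) ^ 2 := fun i => by
    have := hh0 i; positivity
  have hpos2 : ∀ i : Fin (n + 1), 0 < c * (Q + 1 / (h i) ^ 2) := fun i => by
    have := hh0 i; positivity
  -- lower bound in exponentiated form
  have hlast : c / (h (Fin.last n)) ^ 2 ≤ (2:ℝ)^(2 * f (Fin.last n)) :=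
    (aux_le _ _ (hpos _)).mpr hfn
  have h0' : (2:ℝ)^(2 * f 0) ≤ c * (Q + 1 / (h 0) ^ 2) :=
    (aux_ge _ _ (hpos2 _)).mpr hf1
  intro i
  have hlow : c / (h i) ^ 2 ≤ (2:ℝ)^(2 * f i) := by
    rcases lt_or_eq_of_le (Fin.le_last i) with hi | hi
    · have := hEPI i (Fin.last n) hi
      linarith
    · rw [hi]; exact hlast
  have hup : (2:ℝ)^(2 * f i) ≤ c * (Q + 1 / (h i) ^ 2) := by
    rcases eq_or_lt_of_le (Fin.zero_le i) with hi | hi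
    · rw [← hi]; exact h0'
    · have := hEPI 0 i hi
      have e0 : c * (Q + 1 / (h 0) ^ 2) = c * Q + c / (h 0) ^ 2 := by ring
      have ei : c * (Q + 1 / (h i) ^ 2) = c * Q + c / (h i) ^ 2 := by ring
      linarith
  exact ⟨(aux_le _ _ (hpos i)).mp hlow, (aux_ge _ _ (hpos2 i)).mp hup⟩
end

section
/- Let n ≥ 2 and m ≥ 1 be integers, 0 < h₁ < ⋯ < hₙ and 0 < g₁ < ⋯ < g_m with hₙ > g_m, let p ∈ ℝⁿ and q ∈ ℝᵐ be probability vectors with positive entries (in particular pₙ > 0), let w ≥ 1, Q > 0 and 0 ≤ Q* ≤ Q. Set aᵢ = Q* + 1/hᵢ², bⱼ = Q* + 1/gⱼ², T = Σᵢ pᵢ/aᵢ, and assume T = w Σⱼ qⱼ/bⱼ. Define T₁ = (1/(1−pₙ)) Σ_{i=1}^{n−1} pᵢ/aᵢ = (T − pₙ/aₙ)/(1−pₙ), and let k ∈ {0,1,…,m} be such that bⱼ > 1/T₁ for j ≤ k and bⱼ ≤ 1/T₁ for j > k. If (w−1)T₁ ≥ w Σ_{j=1}^k qⱼ(T₁ −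 1/bⱼ), then there exist a real a₀ > a₁ and an (n+1)×m matrix A (rows indexed 0,1,…,n) with nonnegative entries such that: (i) each column of A sums to 1; (ii) a₀A_{0j} + Σ_{i=1}^n Aᵢⱼ aᵢ = bⱼ for every j; and (iii) for every k′ ∈ {0,1,…,n}, Σ_{i=1}^{k′} pᵢ/aᵢ ≤ w Σⱼ (qⱼ/bⱼ)(Σ_{i=0}^{k′} Aᵢⱼ). -/
/-!
Put `v i = p i / a i` and `c = 1 / T₁`, the `v`-weighted mean of the `a i` over all fades but the
strongest one, so that `a_last < c`. Every `b j` lies between `a_last` and `a₀`, hence is a convex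
combination of `a₀`, `c` and `a_last` that uses only `a₀, c` if `c < b j` and only `c, a_last`
otherwise; in column `j` the weight of `c` is spread over the weaker fades proportionally to `v`.
Below the last row both sides of (iii) are affine in the partial mass `∑_{i ≤ k'} v i`, so (iii)
only has to hold for the masses `0` (trivial) and `∑_{i < last} v i`. There it says that the
columns put at most `v last` worth of weight on the strongest fade, which is (thm:cond2); the last
row is the balance `T = w ∑ q j / b j`.
-/

open Finset

lemma one_div_sq_lt_one_div_sq {x y : ℝ} (hx : 0 < x) (hxy : x < y) : 1 / y ^ 2 < 1 / x ^ 2 :=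
  one_div_lt_one_div_of_lt (by positivity) (pow_lt_pow_left₀ hxy hx.le two_ne_zero)

lemma strictAnti_add_one_div_sq {ι : Type*} [Preorder ι] {f : ι → ℝ} (hf0 : ∀ i, 0 < f i)
    (hf : StrictMono f) (c : ℝ) : StrictAnti fun i => c + 1 / f i ^ 2 :=
  fun _ _ hij => add_lt_add_right (one_div_sq_lt_one_div_sq (hf0 _) (hf hij)) c

lemma exists_three_point_weights {x y z b : ℝ} (hxy : x < y) (hxb : x ≤ b) (hbz : b ≤ max y z) :
    ∃ α β γ : ℝ, 0 ≤ α ∧ 0 ≤ β ∧ 0 ≤ γ ∧ α + β + γ = 1 ∧ α * z + β * y + γ * x = b ∧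
      γ * (y - x) = max (y - b) 0 := by
  by_cases hby : b ≤ y
  · obtain ⟨s, t, hs, ht, hst, rfl⟩ : b ∈ segment ℝ x y := segment_eq_Icc hxy.le ▸ ⟨hxb, hby⟩
    refine ⟨0, t, s, le_rfl, ht, hs, by linarith, by simp only [smul_eq_mul]; ring, ?_⟩
    rw [max_eq_left (by linarith)]
    simp only [smul_eq_mul]
    linear_combination y * hst
  · push Not at hby
    have hbz' : b ≤ z := (le_max_iff.1 hbz).resolve_left hby.not_ge
    obtain ⟨s, t, hs, ht, hst, rfl⟩ : b ∈ segment ℝ y z :=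
      segment_eq_Icc (hby.le.trans hbz') ▸ ⟨hby.le, hbz'⟩
    refine ⟨t, s, 0, ht, hs, le_rfl, by linarith, by simp only [smul_eq_mul]; ring, ?_⟩
    rw [max_eq_right (by linarith)]
    ring

lemma le_add_mul_div_of_le_add {M D c e : ℝ} (hc : 0 ≤ c) (hD : 0 < D) (hDce : D ≤ c + e)
    (hM : 0 ≤ M) (hMD : M ≤ D) : M ≤ c + e * (M / D) := by
  have hr : M / D ≤ 1 := (div_le_one hD).2 hMD
  calc M = M / D * D := (div_mul_cancel₀ _ hD.ne').symm
    _ ≤ M / D * (c + e) := mul_le_mul_of_nonneg_left hDce (div_nonneg hM hD.le)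
    _ ≤ c + e * (M / D) := by nlinarith [mul_le_mul_of_nonneg_right hr hc]

section Column

variable {N : ℕ}

def virtualColumn (α β γ : ℝ) (v : Fin (N + 1) → ℝ) : Fin (N + 2) → ℝ :=
  Fin.cons α fun i => if i = Fin.last N then γ else β * v i

variable {α β γ : ℝ} {v : Fin (N + 1) → ℝ}

@[simp] lemma virtualColumn_zero : virtualColumn α β γ v 0 = α := rfl

@[simp] lemma virtualColumn_succ (i : Fin (N + 1)) :
    virtualColumn α β γ v i.succ = if i = Fin.last N then γ else β * v i := rfl

lemma virtualColumn_nonneg (hα : 0 ≤ α) (hβ : 0 ≤ β) (hγ : 0 ≤ γ) (hv : ∀ i, 0 ≤ v i)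
    (r : Fin (N + 2)) : 0 ≤ virtualColumn α β γ v r := by
  induction r using Fin.cases with
  | zero => exact hα
  | succ i =>
    rw [virtualColumn_succ]
    split_ifs
    exacts [hγ, mul_nonneg hβ (hv i)]

lemma sum_virtualColumn_succ_mul (a : Fin (N + 1) → ℝ) :
    ∑ i, virtualColumn α β γ v i.succ * a i =
      β * ∑ i ∈ univ.erase (Fin.last N), v i * a i + γ * a (Fin.last N) := by
  rw [← add_sum_erase _ _ (mem_univ (Fin.last N)), mul_sum, add_comm]
  simp only [virtualColumn_succ, ↓reduceIte]
  congr 1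
  refine sum_congr rfl fun i hi => ?_
  rw [if_neg (ne_of_mem_erase hi), mul_assoc]

lemma sum_virtualColumn :
    ∑ r, virtualColumn α β γ v r = α + β * ∑ i ∈ univ.erase (Fin.last N), v i + γ := by
  have := sum_virtualColumn_succ_mul (α := α) (β := β) (γ := γ) (v := v) (fun _ => 1)
  simp only [mul_one] at this
  rw [Fin.sum_univ_succ, this, virtualColumn_zero, add_assoc]

lemma ne_last_of_succ_le {i : Fin (N + 1)} {k : Fin (N + 2)} (hk : k ≠ Fin.last (N + 1))
    (hik : i.succ ≤ k) : i ≠ Fin.last N := by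
  rintro rfl
  exact hk (le_antisymm (Fin.le_last k) (by simpa using hik))

lemma sum_Iic_virtualColumn {k : Fin (N + 2)} (hk : k ≠ Fin.last (N + 1)) :
    ∑ r ∈ Iic k, virtualColumn α β γ v r =
      α + β * ∑ i ∈ univ.filter (fun i : Fin (N + 1) => i.succ ≤ k), v i := by
  have hIic : Iic k = univ.filter (· ≤ k) := by ext; simp
  rw [hIic, sum_filter, Fin.sum_univ_succ, if_pos (Fin.zero_le k), ← sum_filter, mul_sum]
  simp only [virtualColumn_zero, virtualColumn_succ]
  congr 1
  exact sum_congr rfl fun i hi => if_neg (ne_last_of_succ_le hk (mem_filter.1 hi).2)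

end Column

lemma sum_filter_le_mul_sum_Iic_virtualColumn {N m : ℕ} {v : Fin (N + 1) → ℝ}
    {b q α t γ : Fin (m + 1) → ℝ} {w D : ℝ} (hv : ∀ i, 0 ≤ v i) (hq : ∀ j, 0 ≤ q j)
    (hb : ∀ j, 0 < b j) (hw : 0 ≤ w) (hα : ∀ j, 0 ≤ α j) (hsum : ∀ j, α j + t j + γ j = 1)
    (hD : ∑ i ∈ univ.erase (Fin.last N), v i = D) (hDpos : 0 < D)
    (hbal : ∑ i, v i = w * ∑ j, q j / b j) (hγv : w * ∑ j, q j / b j * γ j ≤ v (Fin.last N))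
    (k : Fin (N + 2)) :
    ∑ i ∈ univ.filter (fun i : Fin (N + 1) => i.succ ≤ k), v i ≤
      w * ∑ j, q j / b j * ∑ r ∈ Iic k, virtualColumn (α j) (t j / D) (γ j) v r := by
  rcases eq_or_ne k (Fin.last (N + 1)) with rfl | hk
  · have hIic : Iic (Fin.last (N + 1)) = univ := by ext; simp [Fin.le_last]
    rw [hIic, filter_true_of_mem fun i _ => Fin.le_last _, hbal]
    simp only [sum_virtualColumn, hD, div_mul_cancel₀ _ hDpos.ne', hsum, mul_one, le_rfl]
  simp only [sum_Iic_virtualColumn hk]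
  set M := ∑ i ∈ univ.filter (fun i : Fin (N + 1) => i.succ ≤ k), v i
  have hMD : M ≤ D := hD ▸ sum_le_sum_of_subset_of_nonneg
    (fun i hi => mem_erase.2 ⟨ne_last_of_succ_le hk (mem_filter.1 hi).2, mem_univ i⟩)
    fun i _ _ => hv i
  have hDle : D ≤ (w * ∑ j, q j / b j * α j) + w * ∑ j, q j / b j * t j := by
    have hvD : ∑ i, v i = D + v (Fin.last N) := by rw [← hD, sum_erase_add _ _ (mem_univ _)]
    have : (w * ∑ j, q j / b j * α j) + w * ∑ j, q j / b j * t j =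
        (w * ∑ j, q j / b j) - w * ∑ j, q j / b j * γ j := by
      simp only [← mul_add, ← mul_sub, ← sum_add_distrib, ← sum_sub_distrib]
      congr 1
      exact sum_congr rfl fun j _ => by linear_combination (q j / b j) * hsum j
    linarith
  calc M ≤ (w * ∑ j, q j / b j * α j) + (w * ∑ j, q j / b j * t j) * (M / D) :=
        le_add_mul_div_of_le_add (mul_nonneg hw (sum_nonneg fun j _ =>
          mul_nonneg (div_nonneg (hq j) (hb j).le) (hα j))) hDpos hDle
          (sum_nonneg fun i _ => hv i) hMD
    _ = w * ∑ j, q j / b j * (α j + t j / D * M) := by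
      simp only [mul_sum, sum_mul, ← sum_add_distrib]
      exact sum_congr rfl fun j _ => by ring

theorem exists_feasible_matrix {N m : ℕ} {a v : Fin (N + 1) → ℝ} {b q : Fin (m + 1) → ℝ}
    {w c a0 D : ℝ} (hv : ∀ i, 0 ≤ v i) (hq : ∀ j, 0 ≤ q j) (hb : ∀ j, 0 < b j) (hw : 0 ≤ w)
    (hD : ∑ i ∈ univ.erase (Fin.last N), v i = D) (hDpos : 0 < D)
    (hva : ∑ i ∈ univ.erase (Fin.last N), v i * a i = c * D)
    (hac : a (Fin.last N) < c) (hab : ∀ j, a (Fin.last N) ≤ b j) (hba0 : ∀ j, b j ≤ max c a0)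
    (hbal : ∑ i, v i = w * ∑ j, q j / b j)
    (hkey : w * ∑ j, q j / b j * max (c - b j) 0 ≤ (c - a (Fin.last N)) * v (Fin.last N)) :
    ∃ A : Matrix (Fin (N + 2)) (Fin (m + 1)) ℝ,
      (∀ r j, 0 ≤ A r j) ∧
      (∀ j, ∑ r, A r j = 1) ∧
      (∀ j, a0 * A 0 j + ∑ i : Fin (N + 1), A i.succ j * a i = b j) ∧
      (∀ k' : Fin (N + 2),
        ∑ i ∈ univ.filter (fun i : Fin (N + 1) => i.succ ≤ k'), v i ≤
          w * ∑ j, (q j / b j) * ∑ r ∈ Iic k', A r j) := by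
  choose α t γ hα ht hγ hsum hmean hγc using fun j =>
    exists_three_point_weights (z := a0) hac (hab j) (hba0 j)
  have hγv : w * ∑ j, q j / b j * γ j ≤ v (Fin.last N) := by
    refine le_of_mul_le_mul_left ?_ (sub_pos.2 hac)
    calc (c - a (Fin.last N)) * (w * ∑ j, q j / b j * γ j)
        = w * ∑ j, q j / b j * max (c - b j) 0 := by
          simp only [mul_sum, ← hγc]
          exact sum_congr rfl fun j _ => by ring
      _ ≤ _ := hkey
  refine ⟨fun r j => virtualColumn (α j) (t j / D) (γ j) v r,
    fun r j => virtualColumn_nonneg (hα j) (div_nonneg (ht j) hDpos.le) (hγ j) hv r,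
    fun j => ?_, fun j => ?_,
    sum_filter_le_mul_sum_Iic_virtualColumn hv hq hb hw hα hsum hD hDpos hbal hγv⟩
  · rw [sum_virtualColumn, hD, div_mul_cancel₀ _ hDpos.ne', hsum]
  · beta_reduce
    rw [virtualColumn_zero, sum_virtualColumn_succ_mul, hva, ← hmean]
    field_simp
    ring

lemma mul_sum_div_lt_sum {ι : Type*} {s : Finset ι} (hs : s.Nonempty) {p a : ι → ℝ} {x : ℝ}
    (hp : ∀ i ∈ s, 0 < p i) (ha : ∀ i ∈ s, 0 < a i) (hx : ∀ i ∈ s, x < a i) :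
    x * ∑ i ∈ s, p i / a i < ∑ i ∈ s, p i := by
  rw [mul_sum]
  refine sum_lt_sum_of_nonempty hs fun i hi => ?_
  rw [mul_div_left_comm]
  exact mul_lt_of_lt_one_right (hp i hi) ((div_lt_one (ha i hi)).2 (hx i hi))

lemma mul_sum_div_mul_max_le {ι : Type*} [Fintype ι] (P : ι → Prop) [DecidablePred P]
    {q b : ι → ℝ} {w τ T : ℝ} (hτ : 0 < τ) (hb : ∀ j, 0 < b j) (hP : ∀ j, P j → 1 / τ < b j)
    (hnP : ∀ j, ¬P j → b j ≤ 1 / τ) (hqsum : ∑ j, q j = 1) (hbal : T = w * ∑ j, q j / b j)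
    (hcond : (w - 1) * τ ≥ w * ∑ j ∈ univ.filter P, q j * (τ - 1 / b j)) :
    w * ∑ j, q j / b j * max (1 / τ - b j) 0 ≤ (T - τ) / τ := by
  have hpt : ∀ j, q j / b j * max (1 / τ - b j) 0 =
      if P j then 0 else q j * (1 / b j - τ) / τ := fun j => by
    have := (hb j).ne'
    split_ifs with h
    · rw [max_eq_right (by linarith [hP j h]), mul_zero]
    · rw [max_eq_left (by linarith [hnP j h])]
      field_simp
  have hall : ∑ j, q j * (1 / b j - τ) = (∑ j, q j / b j) - τ := by
    simp only [mul_sub, sum_sub_distrib, ← sum_mul, hqsum, one_mul, mul_one_div]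
  have hsplit := sum_filter_add_sum_filter_not univ P fun j => q j * (1 / b j - τ)
  have hneg : ∑ j ∈ univ.filter P, q j * (τ - 1 / b j) =
      -∑ j ∈ univ.filter P, q j * (1 / b j - τ) := by
    rw [← sum_neg_distrib]
    exact sum_congr rfl fun j _ => by ring
  rw [sum_congr rfl fun j _ => hpt j, sum_ite, sum_const_zero, zero_add, ← sum_div,
    mul_div_assoc', div_le_div_iff_of_pos_right hτ, hbal]
  rw [hneg] at hcond
  linear_combination w * hsplit + w * hall + hcond

theorem exists_feasible_matrix_of_strictAnti {N m : ℕ} {p a : Fin (N + 2) → ℝ}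
    {b q : Fin (m + 1) → ℝ} {w a0 T1 : ℝ} (P : Fin (m + 1) → Prop) [DecidablePred P]
    (hp : ∀ i, 0 < p i) (hpsum : ∑ i, p i = 1) (ha : ∀ i, 0 < a i) (hanti : StrictAnti a)
    (hq : ∀ j, 0 ≤ q j) (hqsum : ∑ j, q j = 1) (hb : ∀ j, 0 < b j) (hw : 0 ≤ w)
    (hab : ∀ j, a (Fin.last (N + 1)) ≤ b j) (hba0 : ∀ j, b j ≤ a0)
    (hbal : ∑ i, p i / a i = w * ∑ j, q j / b j)
    (hT1 : T1 = (∑ i, p i / a i - p (Fin.last (N + 1)) / a (Fin.last (N + 1))) /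
      (1 - p (Fin.last (N + 1))))
    (hP : ∀ j, P j → 1 / T1 < b j) (hnP : ∀ j, ¬P j → b j ≤ 1 / T1)
    (hcond : (w - 1) * T1 ≥ w * ∑ j ∈ univ.filter P, q j * (T1 - 1 / b j)) :
    ∃ A : Matrix (Fin (N + 3)) (Fin (m + 1)) ℝ,
      (∀ r j, 0 ≤ A r j) ∧
      (∀ j, ∑ r, A r j = 1) ∧
      (∀ j, a0 * A 0 j + ∑ i : Fin (N + 2), A i.succ j * a i = b j) ∧
      (∀ k' : Fin (N + 3),
        ∑ i ∈ univ.filter (fun i : Fin (N + 2) => i.succ ≤ k'), p i / a i ≤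
          w * ∑ j, (q j / b j) * ∑ r ∈ Iic k', A r j) := by
  set L := Fin.last (N + 1)
  have h0 : (0 : Fin (N + 2)) ∈ univ.erase L := mem_erase.2 ⟨Fin.last_pos.ne, mem_univ _⟩
  have hpL : ∑ i ∈ univ.erase L, p i = 1 - p L := by
    rw [sum_erase_eq_sub (mem_univ L), hpsum]
  have hpL1 : 0 < 1 - p L := hpL ▸ sum_pos (fun i _ => hp i) ⟨0, h0⟩
  have hD : ∑ i ∈ univ.erase L, p i / a i = T1 * (1 - p L) := by
    rw [sum_erase_eq_sub (mem_univ L), hT1, div_mul_cancel₀ _ hpL1.ne']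
  have hT1pos : 0 < T1 := pos_of_mul_pos_left
    (hD ▸ sum_pos (fun i _ => div_pos (hp i) (ha i)) ⟨0, h0⟩) hpL1.le
  have haT1 : a L * T1 < 1 := by
    have := mul_sum_div_lt_sum ⟨0, h0⟩ (fun i _ => hp i) (fun i _ => ha i)
      fun i hi => hanti (lt_of_le_of_ne (Fin.le_last i) (ne_of_mem_erase hi))
    rw [hD, hpL, ← mul_assoc] at this
    exact (mul_lt_iff_lt_one_left hpL1).1 this
  have hslack : (∑ i, p i / a i - T1) / T1 = (1 / T1 - a L) * (p L / a L) := by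
    have := (ha L).ne'
    rw [← sum_erase_add _ _ (mem_univ L), hD]
    field_simp
    ring
  refine exists_feasible_matrix (v := fun i => p i / a i) (c := 1 / T1)
    (fun i => (div_pos (hp i) (ha i)).le) hq hb hw hD (mul_pos hT1pos hpL1) ?_
    ((lt_div_iff₀ hT1pos).2 (by linarith)) hab (fun j => le_max_of_le_right (hba0 j)) hbal
    ((mul_sum_div_mul_max_le P hT1pos hb hP hnP hqsum hbal hcond).trans_eq hslack)
  rw [sum_congr rfl fun i _ => div_mul_cancel₀ _ (ha i).ne', hpL]
  field_simp

theorem stmt6_general (n m : ℕ)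
    (h : Fin (n + 2) → ℝ) (g : Fin (m + 1) → ℝ)
    (hh0 : ∀ i, 0 < h i) (hhmono : StrictMono h)
    (hg0 : ∀ j, 0 < g j) (hgmono : StrictMono g)
    (hng : h (Fin.last (n + 1)) > g (Fin.last m))
    (p : Fin (n + 2) → ℝ) (q : Fin (m + 1) → ℝ)
    (hp : ∀ i, 0 < p i) (hpsum : ∑ i, p i = 1)
    (hq : ∀ j, 0 < q j) (hqsum : ∑ j, q j = 1)
    (w Qstar : ℝ) (hw : 1 ≤ w) (hQs : 0 ≤ Qstar)
    (a : Fin (n + 2) → ℝ) (b : Fin (m + 1) → ℝ)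
    (ha : ∀ i, a i = Qstar + 1 / (h i) ^ 2)
    (hb : ∀ j, b j = Qstar + 1 / (g j) ^ 2)
    (T : ℝ) (hT : T = ∑ i, p i / a i)
    (hbal : T = w * ∑ j, q j / b j)
    (T1 : ℝ)
    (hT1 : T1 = (T - p (Fin.last (n + 1)) / a (Fin.last (n + 1))) /
      (1 - p (Fin.last (n + 1))))
    (k : ℕ)
    (hksep1 : ∀ j : Fin (m + 1), (j : ℕ) < k → 1 / T1 < b j)
    (hksep2 : ∀ j : Fin (m + 1), k ≤ (j : ℕ) → b j ≤ 1 / T1)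
    (hcond : (w - 1) * T1 ≥
      w * ∑ j ∈ Finset.univ.filter (fun j : Fin (m + 1) => (j : ℕ) < k),
        q j * (T1 - 1 / b j)) :
    ∃ a0 : ℝ, a0 > a 0 ∧
      ∃ A : Matrix (Fin (n + 3)) (Fin (m + 1)) ℝ,
        (∀ r j, 0 ≤ A r j) ∧
        (∀ j, ∑ r, A r j = 1) ∧
        (∀ j, a0 * A 0 j + ∑ i : Fin (n + 2), A i.succ j * a i = b j) ∧
        (∀ k' : Fin (n + 3),
          ∑ i ∈ Finset.univ.filter (fun i : Fin (n + 2) => i.succ ≤ k'), p i / a i ≤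
          w * ∑ j, (q j / b j) * ∑ r ∈ Finset.Iic k', A r j) := by
  subst hT
  have hapos : ∀ i, 0 < a i := fun i => by rw [ha i]; have := hh0 i; positivity
  have hbpos : ∀ j, 0 < b j := fun j => by rw [hb j]; have := hg0 j; positivity
  have hbanti : StrictAnti b := funext hb ▸ strictAnti_add_one_div_sq hg0 hgmono Qstar
  have hab : ∀ j, a (Fin.last (n + 1)) < b j := fun j => by
    rw [ha, hb]
    exact add_lt_add_right (one_div_sq_lt_one_div_sq (hg0 j)
      ((hgmono.monotone (Fin.le_last j)).trans_lt hng)) Qstar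
  refine ⟨a 0 + b 0, by linarith [hbpos 0], exists_feasible_matrix_of_strictAnti
    (fun j : Fin (m + 1) => (j : ℕ) < k) hp hpsum hapos
    (funext ha ▸ strictAnti_add_one_div_sq hh0 hhmono Qstar) (fun j => (hq j).le) hqsum hbpos
    (by linarith) (fun j => (hab j).le) (fun j => ?_) hbal hT1 hksep1
    (fun j hj => hksep2 j (not_lt.1 hj)) hcond⟩
  linarith [hbanti.antitone (Fin.zero_le j), hapos 0]

/-- Theorem 2 (thm1) of the paper: under condition (thm:cond2), there exists a
virtual-fade value `a₀ > a₁` and an `(n+1)×m` nonnegative matrix `A` (rows indexed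
`0,1,…,n`, here by `Fin (n+3)` with the genuine fades indexed via `Fin.succ`)
satisfying the feasibility conditions of Case 1 of Theorem 1.
Here `n ≥ 2` is encoded as `n + 2` and `m ≥ 1` as `m + 1`. -/
theorem stmt6 (n m : ℕ)
    (h : Fin (n + 2) → ℝ) (g : Fin (m + 1) → ℝ)
    (hh0 : ∀ i, 0 < h i) (hhmono : StrictMono h)
    (hg0 : ∀ j, 0 < g j) (hgmono : StrictMono g)
    (hng : h (Fin.last (n + 1)) > g (Fin.last m))
    (p : Fin (n + 2) → ℝ) (q : Fin (m + 1) → ℝ)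
    (hp : ∀ i, 0 < p i) (hpsum : ∑ i, p i = 1)
    (hq : ∀ j, 0 < q j) (hqsum : ∑ j, q j = 1)
    (w Q Qstar : ℝ) (hw : 1 ≤ w) (hQ : 0 < Q) (hQs : 0 ≤ Qstar) (hQsQ : Qstar ≤ Q)
    (a : Fin (n + 2) → ℝ) (b : Fin (m + 1) → ℝ)
    (ha : ∀ i, a i = Qstar + 1 / (h i) ^ 2)
    (hb : ∀ j, b j = Qstar + 1 / (g j) ^ 2)
    (T : ℝ) (hT : T = ∑ i, p i / a i)
    (hbal : T = w * ∑ j, q j / b j)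
    (T1 : ℝ)
    (hT1 : T1 = (T - p (Fin.last (n + 1)) / a (Fin.last (n + 1))) /
      (1 - p (Fin.last (n + 1))))
    (k : ℕ) (hk : k ≤ m + 1)
    (hksep1 : ∀ j : Fin (m + 1), (j : ℕ) < k → 1 / T1 < b j)
    (hksep2 : ∀ j : Fin (m + 1), k ≤ (j : ℕ) → b j ≤ 1 / T1)
    (hcond : (w - 1) * T1 ≥
      w * ∑ j ∈ Finset.univ.filter (fun j : Fin (m + 1) => (j : ℕ) < k),
        q j * (T1 - 1 / b j)) :
    ∃ a0 : ℝ, a0 > a 0 ∧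
      ∃ A : Matrix (Fin (n + 3)) (Fin (m + 1)) ℝ,
        (∀ r j, 0 ≤ A r j) ∧
        (∀ j, ∑ r, A r j = 1) ∧
        (∀ j, a0 * A 0 j + ∑ i : Fin (n + 2), A i.succ j * a i = b j) ∧
        (∀ k' : Fin (n + 3),
          ∑ i ∈ Finset.univ.filter (fun i : Fin (n + 2) => i.succ ≤ k'), p i / a i ≤
          w * ∑ j, (q j / b j) * ∑ r ∈ Finset.Iic k', A r j) :=
  stmt6_general n m h g hh0 hhmono hg0 hgmono hng p q hp hpsum hq hqsum w Qstar hw hQs a b ha hb T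
    hT hbal T1 hT1 k hksep1 hksep2 hcond
end

section
/- Let n ≥ 2 and m ≥ 1 be integers, 0 < h₁ < ⋯ < hₙ and 0 < g₁ < ⋯ < g_m with hₙ > g_m, let p ∈ ℝⁿ and q ∈ ℝᵐ be probability vectors with positive entries, let w ≥ 1 and Q* ≥ 0. Set aᵢ = Q* + 1/hᵢ², bⱼ = Q* + 1/gⱼ², T = Σᵢ pᵢ/aᵢ, and assume T = w Σⱼ qⱼ/bⱼ. Define T₁ = (T − pₙ/aₙ)/(1−pₙ), and let k ∈ {0,1,…,m} be such that bⱼ > 1/T₁ for j ≤ k and bⱼ ≤ 1/T₁ for j > k. Note that aₙT < 1, T − pₙ/aₙ > 0, and bⱼ > aₙ for all j. If (w−1)T₁ ≥ w Σ_{j=1}^k qⱼ(T₁ − 1/bⱼ), then there exist positive reals α₁,…,α_m with Σⱼ αⱼ = 1 and αⱼ ≤ (wqⱼ/bⱼ)·min{(bⱼ − aₙ)/(1 − aₙT), 1/(T − pₙ/aₙ)} for every j. -/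
set_option maxHeartbeats 2000000


/-- Lemma existence:alphas in the proof of Theorem 2 (thm1): under condition
(thm:cond2) there exist positive reals `α₁,…,α_m` summing to `1` with
`αⱼ ≤ (wqⱼ/bⱼ)·min{(bⱼ − aₙ)/(1 − aₙT), 1/(T − pₙ/aₙ)}` for every `j`.
Here `n ≥ 2` is encoded as `n + 2` and `m ≥ 1` as `m + 1`. -/
theorem stmt7 (n m : ℕ)
    (h : Fin (n + 2) → ℝ) (g : Fin (m + 1) → ℝ)
    (hh0 : ∀ i, 0 < h i) (hhmono : StrictMono h)
    (hg0 : ∀ j, 0 < g j) (hgmono : StrictMono g)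
    (hng : h (Fin.last (n + 1)) > g (Fin.last m))
    (p : Fin (n + 2) → ℝ) (q : Fin (m + 1) → ℝ)
    (hp : ∀ i, 0 < p i) (hpsum : ∑ i, p i = 1)
    (hq : ∀ j, 0 < q j) (hqsum : ∑ j, q j = 1)
    (w Qstar : ℝ) (hw : 1 ≤ w) (hQs : 0 ≤ Qstar)
    (a : Fin (n + 2) → ℝ) (b : Fin (m + 1) → ℝ)
    (ha : ∀ i, a i = Qstar + 1 / (h i) ^ 2)
    (hb : ∀ j, b j = Qstar + 1 / (g j) ^ 2)
    (T : ℝ) (hT : T = ∑ i, p i / a i)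
    (hbal : T = w * ∑ j, q j / b j)
    (T1 : ℝ)
    (hT1 : T1 = (T - p (Fin.last (n + 1)) / a (Fin.last (n + 1))) /
      (1 - p (Fin.last (n + 1))))
    (k : ℕ) (hk : k ≤ m + 1)
    (hksep1 : ∀ j : Fin (m + 1), (j : ℕ) < k → 1 / T1 < b j)
    (hksep2 : ∀ j : Fin (m + 1), k ≤ (j : ℕ) → b j ≤ 1 / T1)
    (hcond : (w - 1) * T1 ≥
      w * ∑ j ∈ Finset.univ.filter (fun j : Fin (m + 1) => (j : ℕ) < k),
        q j * (T1 - 1 / b j)) :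
    ∃ α : Fin (m + 1) → ℝ, (∀ j, 0 < α j) ∧ (∑ j, α j = 1) ∧
      ∀ j, α j ≤ (w * q j / b j) *
        min ((b j - a (Fin.last (n + 1))) / (1 - a (Fin.last (n + 1)) * T))
          (1 / (T - p (Fin.last (n + 1)) / a (Fin.last (n + 1)))) := by
  have hw0 : 0 < w := lt_of_lt_of_le one_pos hw
  set N : Fin (n + 2) := Fin.last (n + 1) with hN
  have ha0 : ∀ i, 0 < a i := fun i => by
    have := hh0 i; rw [ha]; positivity
  have hb0 : ∀ j, 0 < b j := fun j => by
    have := hg0 j; rw [hb]; positivity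
  set aN := a N with haNdef
  set pN := p N with hpNdef
  have haN : 0 < aN := ha0 N
  -- every b j exceeds aN
  have hbgt : ∀ j, aN < b j := by
    intro j
    have hgj : g j < h N := lt_of_le_of_lt (hgmono.monotone (Fin.le_last j)) hng
    have h2 : (g j) ^ 2 < (h N) ^ 2 := by nlinarith [hg0 j]
    have h3 : 1 / (h N) ^ 2 < 1 / (g j) ^ 2 := by
      apply one_div_lt_one_div_of_lt (by nlinarith [hg0 j]) h2
    rw [hb, haNdef, ha]
    linarith
  -- aN is the least of the a i
  have haNle : ∀ i, aN ≤ a i := by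
    intro i
    have h1 : h i ≤ h N := hhmono.monotone (Fin.le_last i)
    have h2 : (h i) ^ 2 ≤ (h N) ^ 2 := by nlinarith [hh0 i]
    have h3 : 1 / (h N) ^ 2 ≤ 1 / (h i) ^ 2 :=
      one_div_le_one_div_of_le (by nlinarith [hh0 i]) h2
    rw [haNdef, ha, ha]
    linarith
  have h0N : (0 : Fin (n + 2)) ≠ N := by
    simp [hN, Fin.ext_iff]
  -- pN < 1
  have hpN1 : pN < 1 := by
    rw [← hpsum]
    exact Finset.single_lt_sum h0N (Finset.mem_univ _) (Finset.mem_univ _) (hp 0)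
      (fun i _ _ => (hp i).le)
  clear_value aN pN
  set D : ℝ := 1 - pN with hDdef
  clear_value D
  have hD : 0 < D := by rw [hDdef]; linarith
  set S : ℝ := T - pN / aN with hSdef
  clear_value S
  -- S as a sum over the erased set
  have hSsum : S = ∑ i ∈ Finset.univ.erase N, p i / a i := by
    have := Finset.sum_erase_add Finset.univ (fun i => p i / a i) (Finset.mem_univ N)
    rw [hSdef, hT]
    rw [← hpNdef, ← haNdef] at this
    linarith [this]
  have hS : 0 < S := by
    rw [hSsum]
    apply Finset.sum_pos
    · intro i _
      exact div_pos (hp i) (ha0 i)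
    · exact ⟨0, Finset.mem_erase.mpr ⟨h0N, Finset.mem_univ 0⟩⟩
  -- aN strictly less than a 0
  have haanti : aN < a 0 := by
    have hne : (0 : Fin (n + 2)) < N := by
      simp [hN, Fin.lt_def]
    have hh : h 0 < h N := hhmono hne
    have h2 : (h 0) ^ 2 < (h N) ^ 2 := by nlinarith [hh0 0]
    have h3 : 1 / (h N) ^ 2 < 1 / (h 0) ^ 2 :=
      one_div_lt_one_div_of_lt (by nlinarith [hh0 0]) h2
    rw [haNdef, ha, ha]
    linarith
  set E : ℝ := 1 - aN * T with hEdef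
  clear_value E
  have hE : 0 < E := by
    have key : aN * T < 1 := by
      rw [hT, Finset.mul_sum, ← hpsum]
      apply Finset.sum_lt_sum
      · intro i _
        rw [mul_div_assoc', div_le_iff₀ (ha0 i)]
        linarith [mul_le_mul_of_nonneg_left (haNle i) (hp i).le]
      · refine ⟨0, Finset.mem_univ _, ?_⟩
        rw [mul_div_assoc', div_lt_iff₀ (ha0 0)]
        linarith [mul_lt_mul_of_pos_left haanti (hp 0)]
    rw [hEdef]; linarith
  -- T1 relations
  have hT1' : T1 = S / D := hT1
  have hT1pos : 0 < T1 := by rw [hT1']; exact div_pos hS hD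
  have hSDT1 : S = D * T1 := by rw [hT1']; field_simp
  -- E = D - aN * S
  have hEDS : E = D - aN * S := by
    rw [hEdef, hDdef, hSdef]
    field_simp
    ring
  -- filtered sums
  set F := Finset.univ.filter (fun j : Fin (m + 1) => (j : ℕ) < k) with hF
  clear_value F
  set Qk : ℝ := ∑ j ∈ F, q j with hQk
  set Sk : ℝ := ∑ j ∈ F, q j / b j with hSk
  set Sall : ℝ := ∑ j, q j / b j with hSall
  clear_value Qk Sk Sall
  have hSall' : T = w * Sall := hbal
  -- rewrite the condition
  have hcond' : w * (T1 * Qk - Sk) ≤ (w - 1) * T1 := by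
    have e : ∑ j ∈ F, q j * (T1 - 1 / b j) = T1 * Qk - Sk := by
      rw [hQk, hSk, Finset.mul_sum, ← Finset.sum_sub_distrib]
      apply Finset.sum_congr rfl
      intro j _
      ring
    rw [← e]
    exact hcond
  -- multiplied condition
  have hcond2 : w * S * Qk - w * D * Sk ≤ (w - 1) * S := by
    have h1 := mul_le_mul_of_nonneg_right hcond' hD.le
    have e1 : w * S * Qk = w * (D * T1) * Qk := by rw [← hSDT1]
    have e2 : (w - 1) * S = (w - 1) * (D * T1) := by rw [← hSDT1]
    linarith [h1]
  -- terms Sk, Qk are nonnegative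
  have hSknn : 0 ≤ Sk := by
    rw [hSk]
    exact Finset.sum_nonneg fun j _ => (div_pos (hq j) (hb0 j)).le
  -- complement sums
  have hqsplit : Qk + ∑ j ∈ Finset.univ.filter (fun j : Fin (m + 1) => ¬ (j : ℕ) < k), q j = 1 := by
    rw [hQk, hF, Finset.sum_filter_add_sum_filter_not, hqsum]
  have hbsplit : Sk + ∑ j ∈ Finset.univ.filter (fun j : Fin (m + 1) => ¬ (j : ℕ) < k), q j / b j
      = Sall := by
    rw [hSk, hSall, hF, Finset.sum_filter_add_sum_filter_not]
  -- the upper-bound function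
  set U : Fin (m + 1) → ℝ := fun j => (w * q j / b j) *
      min ((b j - aN) / E) (1 / S) with hU
  have hUpos : ∀ j, 0 < U j := by
    intro j
    apply mul_pos (div_pos (mul_pos hw0 (hq j)) (hb0 j))
    apply lt_min
    · exact div_pos (by linarith [hbgt j]) hE
    · exact div_pos one_pos hS
  -- min evaluation on F
  have hminF : ∀ j ∈ F, U j = (w * q j / b j) * (1 / S) := by
    intro j hj
    rw [hU]
    simp only
    congr 1
    apply min_eq_right
    rw [div_le_div_iff₀ hS hE]
    have hbj : 1 / T1 < b j := hksep1 j (by simpa [hF] using hj)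
    have : 1 < b j * T1 := by
      rw [div_lt_iff₀ hT1pos] at hbj
      linarith
    have hDbS : D < b j * S := by
      rw [hSDT1]
      linarith [mul_lt_mul_of_pos_left this hD]
    linarith [hDbS, hEDS]
  -- min evaluation off F
  have hminFc : ∀ j ∈ Finset.univ.filter (fun j : Fin (m + 1) => ¬ (j : ℕ) < k),
      U j = (w * q j / b j) * ((b j - aN) / E) := by
    intro j hj
    rw [hU]
    simp only
    congr 1
    apply min_eq_left
    rw [div_le_div_iff₀ hE hS]
    have hbj : b j ≤ 1 / T1 := hksep2 j (by simpa [hF] using hj)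
    have : b j * T1 ≤ 1 := by
      rw [le_div_iff₀ hT1pos] at hbj
      linarith
    have hDbS : b j * S ≤ D := by
      rw [hSDT1]
      linarith [mul_le_mul_of_nonneg_left this hD.le]
    linarith [hDbS, hEDS]
  set Fc := Finset.univ.filter (fun j : Fin (m + 1) => ¬ (j : ℕ) < k) with hFc
  clear_value Fc
  have e4 : ∑ j ∈ Fc, q j = 1 - Qk := by linarith [hqsplit]
  have e5 : w * ∑ j ∈ Fc, q j / b j = T - w * Sk := by
    have : ∑ j ∈ Fc, q j / b j = Sall - Sk := by linarith [hbsplit]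
    rw [this, hSall']
    ring
  -- numerator of the second block is nonnegative
  have hBnn : 0 ≤ w * (1 - Qk) - aN * (T - w * Sk) := by
    rw [← e4, ← e5, Finset.mul_sum, Finset.mul_sum, Finset.mul_sum, ← Finset.sum_sub_distrib]
    apply Finset.sum_nonneg
    intro j _
    have h1 : q j / b j * aN ≤ q j / b j * b j :=
      mul_le_mul_of_nonneg_left (hbgt j).le (div_nonneg (hq j).le (hb0 j).le)
    have h2 : q j / b j * b j = q j := div_mul_cancel₀ _ (hb0 j).ne'
    have h3 : 0 ≤ w * (q j - aN * (q j / b j)) := mul_nonneg hw0.le (by linarith)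
    linarith [h3]
  -- total sum of U
  have hUsum : ∑ j, U j = w * Sk / S +
      (w * (1 - Qk) - aN * (T - w * Sk)) / E := by
    rw [← Finset.sum_filter_add_sum_filter_not Finset.univ (fun j : Fin (m + 1) => (j : ℕ) < k) U]
    rw [← hF, ← hFc]
    rw [Finset.sum_congr rfl hminF, Finset.sum_congr rfl hminFc]
    have e1 : ∑ j ∈ F, (w * q j / b j) * (1 / S) = w * Sk / S := by
      rw [hSk, Finset.mul_sum, Finset.sum_div]
      apply Finset.sum_congr rfl
      intro j _
      rw [mul_one_div, mul_div_assoc]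
    have e3 : ∀ j ∈ Fc,
        (w * q j / b j) * ((b j - aN) / E) = (w * q j - aN * (w * (q j / b j))) / E := by
      intro j _
      have hbne : b j ≠ 0 := (hb0 j).ne'
      field_simp
    have e2 : ∑ j ∈ Fc, (w * q j / b j) * ((b j - aN) / E)
        = (w * (1 - Qk) - aN * (T - w * Sk)) / E := by
      rw [Finset.sum_congr rfl e3, ← Finset.sum_div]
      congr 1
      rw [Finset.sum_sub_distrib]
      congr 1
      · rw [← Finset.mul_sum, e4]
      · rw [← Finset.mul_sum, ← Finset.mul_sum, e5]
    rw [e1, e2]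
  -- key scalar inequality
  have haT : aN * T = aN * S + pN := by
    have hc : aN * (pN / aN) = pN := by field_simp
    rw [hSdef, mul_sub, hc]
    ring
  have haTS : aN * T * S = (aN * S + pN) * S := by rw [haT]
  have hDS : S * D = S - pN * S := by rw [hDdef]; ring
  have hkey : S * E ≤ w * Sk * E + (w * (1 - Qk) - aN * (T - w * Sk)) * S := by
    rw [hEDS]
    nlinarith [hcond2, haTS, hDS]
  -- the sum of U is at least 1
  have hUsum1 : 1 ≤ ∑ j, U j := by
    rw [hUsum, ← sub_nonneg]
    have hrw : w * Sk / S + (w * (1 - Qk) - aN * (T - w * Sk)) / E - 1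
        = (w * Sk * E + (w * (1 - Qk) - aN * (T - w * Sk)) * S - S * E) / (S * E) := by
      field_simp
    rw [hrw]
    apply div_nonneg _ (mul_pos hS hE).le
    linarith [hkey]
  -- conclude
  have hsumpos : 0 < ∑ j, U j := lt_of_lt_of_le one_pos hUsum1
  refine ⟨fun j => U j / ∑ j', U j', fun j => div_pos (hUpos j) hsumpos, ?_, fun j => ?_⟩
  · rw [← Finset.sum_div, div_self hsumpos.ne']
  · exact le_trans (div_le_self (hUpos j).le hUsum1) (le_refl _)
end

section
/- Let m ≥ 1, let q₁,…,q_m > 0 with Σⱼ qⱼ = 1, let w ≥ 1, let b₁ > b₂ > ⋯ > b_m > aₙ > 0, let 0 ≤ pₙ < 1, and let T = w Σⱼ qⱼ/bⱼ satisfy aₙT < 1 and T − pₙ/aₙ > 0. Set T₁ = (T − pₙ/aₙ)/(1 − pₙ) and let k ∈ {0,1,…,m} be such that bⱼ > 1/T₁ for j ≤ k and bⱼ ≤ 1/T₁ for j > k. Then Σ_{j=1}^m (wqⱼ/bⱼ)·min{(bⱼ − aₙ)/(1 − aₙT), 1/(T − pₙ/aₙ)} ≥ 1 if and only if (w−1)T₁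 ≥ w Σ_{j=1}^k qⱼ(T₁ − 1/bⱼ). -/
/-- The simplification (lem:minsum)–(lem:end) in the proof of Lemma
existence:alphas: the feasibility condition
`∑ⱼ (wqⱼ/bⱼ)·min{(bⱼ − aₙ)/(1 − aₙT), 1/(T − pₙ/aₙ)} ≥ 1` is equivalent to
condition (thm:cond2): `(w−1)T₁ ≥ w ∑_{j=1}^k qⱼ(T₁ − 1/bⱼ)`.
Here `m ≥ 1` is encoded as `m + 1` and the `bⱼ` are strictly decreasing. -/
theorem stmt9 (m : ℕ)
    (q : Fin (m + 1) → ℝ) (hq : ∀ j, 0 < q j) (hqsum : ∑ j, q j = 1)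
    (w : ℝ) (hw : 1 ≤ w)
    (b : Fin (m + 1) → ℝ) (hbanti : StrictAnti b)
    (an : ℝ) (han : 0 < an) (hbm : an < b (Fin.last m))
    (pn : ℝ) (hpn0 : 0 ≤ pn) (hpn1 : pn < 1)
    (T : ℝ) (hT : T = w * ∑ j, q j / b j)
    (hanT : an * T < 1) (hTpn : 0 < T - pn / an)
    (T1 : ℝ) (hT1 : T1 = (T - pn / an) / (1 - pn))
    (k : ℕ) (hk : k ≤ m + 1)
    (hksep1 : ∀ j : Fin (m + 1), (j : ℕ) < k → 1 / T1 < b j)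
    (hksep2 : ∀ j : Fin (m + 1), k ≤ (j : ℕ) → b j ≤ 1 / T1) :
    (∑ j, (w * q j / b j) * min ((b j - an) / (1 - an * T)) (1 / (T - pn / an)) ≥ 1 ↔
      (w - 1) * T1 ≥
        w * ∑ j ∈ Finset.univ.filter (fun j : Fin (m + 1) => (j : ℕ) < k),
          q j * (T1 - 1 / b j)) := by
  have hpn' : 0 < 1 - pn := by linarith
  have hD : 0 < T - pn / an := hTpn
  have hE : 0 < 1 - an * T := by linarith
  have hT1pos : 0 < T1 := by rw [hT1]; positivity
  have hDT1 : T1 * (1 - pn) = T - pn / an := by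
    rw [hT1, div_mul_cancel₀ _ hpn'.ne']
  have hanD : an * (T - pn / an) = an * T - pn := by field_simp
  have hbpos : ∀ j, 0 < b j := fun j =>
    lt_of_lt_of_le (han.trans hbm) (hbanti.antitone (Fin.le_last j))
  have hmin : ∀ j : Fin (m + 1),
      (w * q j / b j) * min ((b j - an) / (1 - an * T)) (1 / (T - pn / an))
      = if (j : ℕ) < k then (w * q j / b j) * (1 / (T - pn / an))
        else (w * q j / b j) * ((b j - an) / (1 - an * T)) := by
    intro j
    by_cases hj : (j : ℕ) < k
    · rw [if_pos hj, min_eq_right]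
      have hbj := hksep1 j hj
      have h1 : 1 < b j * T1 := (div_lt_iff₀ hT1pos).mp hbj
      rw [div_le_div_iff₀ hD hE]
      nlinarith [mul_lt_mul_of_pos_right h1 hpn', hDT1, hanD, hbpos j]
    · rw [if_neg hj, min_eq_left]
      have hbj := hksep2 j (le_of_not_gt hj)
      have h1 : b j * T1 ≤ 1 := (le_div_iff₀ hT1pos).mp hbj
      rw [div_le_div_iff₀ hE hD]
      nlinarith [mul_le_mul_of_nonneg_right h1 hpn'.le, hDT1, hanD, hbpos j]
  have hfsum := Finset.sum_filter_add_sum_filter_not Finset.univ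
      (fun j : Fin (m + 1) => (j : ℕ) < k) q
  rw [hqsum] at hfsum
  have hfsum2 := Finset.sum_filter_add_sum_filter_not Finset.univ
      (fun j : Fin (m + 1) => (j : ℕ) < k) (fun j => q j / b j)
  have hc1 : ∑ j ∈ Finset.univ.filter (fun j : Fin (m + 1) => ¬ (j : ℕ) < k), q j
      = 1 - ∑ j ∈ Finset.univ.filter (fun j : Fin (m + 1) => (j : ℕ) < k), q j := by
    linarith [hfsum]
  have hc2 : ∑ j ∈ Finset.univ.filter (fun j : Fin (m + 1) => ¬ (j : ℕ) < k), q j / b j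
      = (∑ j : Fin (m + 1), q j / b j)
        - ∑ j ∈ Finset.univ.filter (fun j : Fin (m + 1) => (j : ℕ) < k), q j / b j := by
    linarith [hfsum2]
  have hsplit : ∑ j, (w * q j / b j) * min ((b j - an) / (1 - an * T)) (1 / (T - pn / an))
      = (w * ∑ j ∈ Finset.univ.filter (fun j : Fin (m + 1) => (j : ℕ) < k), q j / b j)
          / (T - pn / an)
        + (w * ((1 - ∑ j ∈ Finset.univ.filter (fun j : Fin (m + 1) => (j : ℕ) < k), q j)
            - an * ((∑ j : Fin (m + 1), q j / b j)
              - ∑ j ∈ Finset.univ.filter (fun j : Fin (m + 1) => (j : ℕ) < k), q j / b j)))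
          / (1 - an * T) := by
    rw [Finset.sum_congr rfl fun j _ => hmin j, Finset.sum_ite]
    congr 1
    · rw [eq_div_iff hD.ne', Finset.sum_mul, Finset.mul_sum]
      refine Finset.sum_congr rfl fun j _ => ?_
      rw [mul_one_div, div_mul_cancel₀ _ hD.ne', mul_div_assoc]
    · have hterm : ∀ j : Fin (m + 1),
          (w * q j / b j) * ((b j - an) / (1 - an * T))
          = (w * (q j - an * (q j / b j))) / (1 - an * T) := by
        intro j
        field_simp [(hbpos j).ne', hE.ne']
      rw [Finset.sum_congr rfl fun j _ => hterm j, ← Finset.sum_div, ← Finset.mul_sum,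
        Finset.sum_sub_distrib, ← Finset.mul_sum, hc1, hc2]
  have esum : ∑ j ∈ Finset.univ.filter (fun j : Fin (m + 1) => (j : ℕ) < k),
        q j * (T1 - 1 / b j)
      = (∑ j ∈ Finset.univ.filter (fun j : Fin (m + 1) => (j : ℕ) < k), q j) * T1
        - ∑ j ∈ Finset.univ.filter (fun j : Fin (m + 1) => (j : ℕ) < k), q j / b j := by
    rw [Finset.sum_mul]
    rw [← Finset.sum_sub_distrib]
    exact Finset.sum_congr rfl fun j _ => by ring
  rw [hsplit, esum]
  set A := ∑ j ∈ Finset.univ.filter (fun j : Fin (m + 1) => (j : ℕ) < k), q j / b j with hA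
  set B := ∑ j ∈ Finset.univ.filter (fun j : Fin (m + 1) => (j : ℕ) < k), q j with hB
  set S := ∑ j : Fin (m + 1), q j / b j with hS
  clear_value A B S
  clear hsplit esum hc1 hc2 hfsum hfsum2 hmin
  rw [ge_iff_le, ge_iff_le, div_add_div _ _ hD.ne' hE.ne', le_div_iff₀ (mul_pos hD hE)]
  have keyeq : w * A * (1 - an * T) + (T - pn / an) * (w * ((1 - B) - an * (S - A)))
      - 1 * ((T - pn / an) * (1 - an * T))
      = w * A * (1 - pn) + w * (T - pn / an) - w * B * (T - pn / an) - (T - pn / an) := by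
    linear_combination (w * A) * hanD + (an * (T - pn / an)) * hT
  have keyeq2 : ((w - 1) * T1 - w * (B * T1 - A)) * (1 - pn)
      = w * A * (1 - pn) + w * (T - pn / an) - w * B * (T - pn / an) - (T - pn / an) := by
    linear_combination ((w - 1) - w * B) * hDT1
  constructor
  · intro h
    have h3 : 0 ≤ ((w - 1) * T1 - w * (B * T1 - A)) * (1 - pn) := by
      rw [keyeq2]; linarith [keyeq, h]
    have h4 := (mul_nonneg_iff_of_pos_right hpn').mp h3
    linarith [h4]
  · intro h
    have h3 : 0 ≤ ((w - 1) * T1 - w * (B * T1 - A)) * (1 - pn) :=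
      mul_nonneg (by linarith) hpn'.le
    rw [keyeq2] at h3
    linarith [keyeq, h3]
end

section
/- Let n ≥ 2, 0 < h₁ < ⋯ < hₙ, let p ∈ ℝⁿ be a probability vector with positive entries, let Q* ≥ 0, w ≥ 1, and suppose g_m > 0 satisfies (1−pₙ)/g_m² ≥ Σ_{i=1}^{n−1} pᵢ/hᵢ². Let q ∈ ℝᵐ be a probability vector with positive entries and 0 < g₁ < ⋯ < g_m, set aᵢ = Q* + 1/hᵢ², bⱼ = Q* + 1/gⱼ², T = Σᵢ pᵢ/aᵢ = w Σⱼ qⱼ/bⱼ, and T₁ = (T − pₙ/aₙ)/(1−pₙ). Then for every k ∈ {0,1,…,m}: (w−1)T₁ ≥ w Σ_{j=1}^k qⱼ(T₁ − 1/bⱼ). -/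
/-!
By Sedrakyan's lemma, the weighted mean `T₁` of the `1/aᵢ` over `i < n` is at least the reciprocal
of the weighted mean of those `aᵢ`, which condition 2 bounds by `b_m`. Hence `T₁ ≥ 1/b_m ≥ 1/bⱼ`,
every summand `qⱼ(T₁ − 1/bⱼ)` is nonnegative, and the partial sums are dominated by the full sum
`T₁ − T/w`. It remains to see `T₁ ≤ T`, which holds because `1/aₙ` is the largest of the `1/aᵢ`.
-/

open Finset

variable {ι R : Type*} [Field R] [LinearOrder R] [IsStrictOrderedRing R]

theorem sum_div_le_sum_div_of_sum_mul_le {s : Finset ι} {p a : ι → R} {B : R}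
    (hp : ∀ i ∈ s, 0 < p i) (ha : ∀ i ∈ s, 0 < a i) (hB : 0 < B)
    (hmean : ∑ i ∈ s, p i * a i ≤ (∑ i ∈ s, p i) * B) :
    (∑ i ∈ s, p i) / B ≤ ∑ i ∈ s, p i / a i := by
  rcases s.eq_empty_or_nonempty with rfl | hs
  · simp
  have hpa : ∀ i ∈ s, 0 < p i * a i := fun i hi ↦ mul_pos (hp i hi) (ha i hi)
  have hP : 0 < ∑ i ∈ s, p i := sum_pos hp hs
  calc (∑ i ∈ s, p i) / B = (∑ i ∈ s, p i) ^ 2 / ((∑ i ∈ s, p i) * B) := by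
        field_simp
    _ ≤ (∑ i ∈ s, p i) ^ 2 / ∑ i ∈ s, p i * a i :=
        div_le_div_of_nonneg_left (sq_nonneg _) (sum_pos hpa hs) hmean
    _ ≤ ∑ i ∈ s, p i ^ 2 / (p i * a i) := sq_sum_div_le_sum_sq_div s p hpa
    _ = ∑ i ∈ s, p i / a i := sum_congr rfl fun i hi ↦ by
        have := (hp i hi).ne'
        field_simp

theorem sum_erase_div_div_one_sub_le_sum_div [Fintype ι] [DecidableEq ι] {p a : ι → R} {L : ι}
    (hp : ∀ i, 0 ≤ p i) (hpsum : ∑ i, p i = 1) (hpL : p L < 1) (ha : ∀ i, 0 < a i)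
    (haL : ∀ i, a L ≤ a i) :
    (∑ i ∈ univ.erase L, p i / a i) / (1 - p L) ≤ ∑ i, p i / a i := by
  have hrest : ∑ i ∈ univ.erase L, p i / a i ≤ (1 - p L) / a L := by
    rw [← hpsum, ← sum_erase_eq_sub (mem_univ L), sum_div]
    exact sum_le_sum fun i _ ↦ div_le_div_of_nonneg_left (hp i) (ha L) (haL i)
  rw [← add_sum_erase _ _ (mem_univ L), div_le_iff₀ (sub_pos.2 hpL)]
  have hmix := mul_le_mul_of_nonneg_left hrest (hp L)
  rw [mul_div_left_comm] at hmix
  nlinarith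

theorem mul_sum_mul_sub_le_of_le_mean [Fintype ι] {q c : ι → R} {t w : R} (S : Finset ι)
    (hq : ∀ j, 0 ≤ q j) (hqsum : ∑ j, q j = 1) (hc : ∀ j, c j ≤ t) (hw : 0 ≤ w)
    (ht : t ≤ w * ∑ j, q j * c j) :
    w * ∑ j ∈ S, q j * (t - c j) ≤ (w - 1) * t := by
  have hterm : ∀ j, 0 ≤ q j * (t - c j) := fun j ↦ mul_nonneg (hq j) (sub_nonneg.2 (hc j))
  have hfull : ∑ j, q j * (t - c j) = t - ∑ j, q j * c j := by
    simp only [mul_sub, sum_sub_distrib, ← sum_mul, hqsum, one_mul]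
  calc w * ∑ j ∈ S, q j * (t - c j) ≤ w * ∑ j, q j * (t - c j) := by
        gcongr
        · exact fun j _ _ ↦ hterm j
        · exact subset_univ S
    _ ≤ (w - 1) * t := by rw [hfull]; linarith

/-- Conclusion of the second part of the proof of Theorem 3 (thm:deg-gen): under
condition 2 of that theorem (`(1−pₙ)/g_m² ≥ ∑_{i<n} pᵢ/hᵢ²`), condition
(thm:cond2) of Theorem 2 holds for every `k ∈ {0,1,…,m}`:
`(w−1)T₁ ≥ w ∑_{j=1}^k qⱼ(T₁ − 1/bⱼ)`.
Here `n ≥ 2` is encoded as `n + 2` and `m ≥ 1` as `m + 1`. -/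
theorem stmt14 (n m : ℕ)
    (h : Fin (n + 2) → ℝ) (hh0 : ∀ i, 0 < h i) (hhmono : StrictMono h)
    (p : Fin (n + 2) → ℝ) (hp : ∀ i, 0 < p i) (hpsum : ∑ i, p i = 1)
    (Qstar w : ℝ) (hQs : 0 ≤ Qstar) (hw : 1 ≤ w)
    (g : Fin (m + 1) → ℝ) (hg0 : ∀ j, 0 < g j) (hgmono : StrictMono g)
    (hcond : (1 - p (Fin.last (n + 1))) / (g (Fin.last m)) ^ 2 ≥
      ∑ i ∈ Finset.univ.erase (Fin.last (n + 1)), p i / (h i) ^ 2)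
    (q : Fin (m + 1) → ℝ) (hq : ∀ j, 0 < q j) (hqsum : ∑ j, q j = 1)
    (a : Fin (n + 2) → ℝ) (b : Fin (m + 1) → ℝ)
    (ha : ∀ i, a i = Qstar + 1 / (h i) ^ 2)
    (hb : ∀ j, b j = Qstar + 1 / (g j) ^ 2)
    (T : ℝ) (hT : T = ∑ i, p i / a i)
    (hbal : T = w * ∑ j, q j / b j)
    (T1 : ℝ)
    (hT1 : T1 = (T - p (Fin.last (n + 1)) / a (Fin.last (n + 1))) /
      (1 - p (Fin.last (n + 1)))) :
    ∀ k : ℕ, k ≤ m + 1 →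
      (w - 1) * T1 ≥
        w * ∑ j ∈ Finset.univ.filter (fun j : Fin (m + 1) => (j : ℕ) < k),
          q j * (T1 - 1 / b j) := by
  intro k _
  set L := Fin.last (n + 1)
  set M := Fin.last m
  have ha_pos : ∀ i, 0 < a i := fun i ↦ by rw [ha]; have := hh0 i; positivity
  have hb_pos : ∀ j, 0 < b j := fun j ↦ by rw [hb]; have := hg0 j; positivity
  have haL : ∀ i, a L ≤ a i := fun i ↦ by
    rw [ha, ha]; have := hh0 i; gcongr; exact hhmono.monotone (Fin.le_last i)
  have hbM : ∀ j, b M ≤ b j := fun j ↦ by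
    rw [hb, hb]; have := hg0 j; gcongr; exact hgmono.monotone (Fin.le_last j)
  have hrest : ∑ i ∈ univ.erase L, p i = 1 - p L := by
    rw [sum_erase_eq_sub (mem_univ L), hpsum]
  have hpL : p L < 1 := by
    have : 0 < ∑ i ∈ univ.erase L, p i :=
      sum_pos (fun i _ ↦ hp i) ⟨0, mem_erase.2 ⟨by simp [L, Fin.ext_iff], mem_univ 0⟩⟩
    linarith
  have hR : ∑ i ∈ univ.erase L, p i / a i = T - p L / a L := by
    rw [hT, sum_erase_eq_sub (mem_univ L)]
  have hT1b : 1 / b M ≤ T1 := by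
    rw [hT1, ← hR, le_div_iff₀ (sub_pos.2 hpL), one_div_mul_eq_div, ← hrest]
    refine sum_div_le_sum_div_of_sum_mul_le (fun i _ ↦ hp i) (fun i _ ↦ ha_pos i) (hb_pos M) ?_
    simp only [ha, hb, mul_add, sum_add_distrib, ← sum_mul, mul_one_div, hrest]
    linarith
  have hT1T : T1 ≤ T := by
    rw [hT1, ← hR, hT]
    exact sum_erase_div_div_one_sub_le_sum_div (fun i ↦ (hp i).le) hpsum hpL ha_pos haL
  exact mul_sum_mul_sub_le_of_le_mean _ (fun j ↦ (hq j).le) hqsum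
    (fun j ↦ (one_div_le_one_div_of_le (hb_pos M) (hbM j)).trans hT1b) (by linarith)
    (by simpa only [mul_one_div, ← hbal] using hT1T)
end

section
/- Let n,m ≥ 1, let h₁,…,hₙ > 0 and 0 < g₁ < ⋯ < g_m, let p ∈ ℝⁿ and q ∈ ℝᵐ be probability vectors with positive entries, and let 0 ≤ Q* ≤ Q. Suppose 1/g_m² ≥ Σᵢ pᵢ/hᵢ². Then Σᵢ pᵢ · log((1 + hᵢ²Q)/(1 + hᵢ²Q*)) ≥ Σⱼ qⱼ · log((1 + gⱼ²Q)/(1 + gⱼ²Q*)). -/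
/-!
With `F s = log (s + Q) - log (s + Q*)`, each summand is `log ((1 + x Q) / (1 + x Q*)) = F (1/x)`.
On `s > -Q*` the function `F` is decreasing and convex (its derivative `(Q* - Q) / ((s + Q*) (s + Q))`
increases with `s`), so Jensen's inequality and the hypothesis `∑ pᵢ/hᵢ² ≤ 1/g_m² ≤ 1/gⱼ²` give
`∑ pᵢ F(1/hᵢ²) ≥ F(∑ pᵢ/hᵢ²) ≥ F(1/g_m²) ≥ ∑ qⱼ F(1/gⱼ²)`.
-/

open Real Set

section LogRatio
variable {a b : ℝ}

lemma hasDerivAt_log_add_sub_log_add {s : ℝ} (ha : 0 < s + a) (hb : 0 < s + b) :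
    HasDerivAt (fun s => log (s + b) - log (s + a)) ((a - b) / ((s + a) * (s + b))) s := by
  refine ((((hasDerivAt_id s).add_const b).log hb.ne').sub
    (((hasDerivAt_id s).add_const a).log ha.ne')).congr_deriv ?_
  simp only [id]
  field_simp
  ring

lemma deriv_log_add_sub_log_add {s : ℝ} (hs : s ∈ Ioi (-a)) (hab : a ≤ b) :
    deriv (fun s => log (s + b) - log (s + a)) s = (a - b) / ((s + a) * (s + b)) :=
  (hasDerivAt_log_add_sub_log_add (by simp_all; linarith) (by simp_all; linarith)).deriv

lemma differentiableOn_log_add_sub_log_add (hab : a ≤ b) :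
    DifferentiableOn ℝ (fun s => log (s + b) - log (s + a)) (Ioi (-a)) := fun s hs =>
  (hasDerivAt_log_add_sub_log_add (by simp_all; linarith) (by simp_all; linarith))
    |>.differentiableAt.differentiableWithinAt

lemma antitoneOn_log_add_sub_log_add (hab : a ≤ b) :
    AntitoneOn (fun s => log (s + b) - log (s + a)) (Ioi (-a)) := by
  have hf := differentiableOn_log_add_sub_log_add hab
  refine antitoneOn_of_deriv_nonpos (convex_Ioi _) hf.continuousOn
    (by rwa [interior_Ioi]) fun s hs => ?_
  rw [interior_Ioi] at hs
  have hsa : 0 < s + a := by simp_all; linarith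
  rw [deriv_log_add_sub_log_add hs hab]
  exact div_nonpos_of_nonpos_of_nonneg (by linarith) (by nlinarith)

lemma convexOn_log_add_sub_log_add (hab : a ≤ b) :
    ConvexOn ℝ (Ioi (-a)) (fun s => log (s + b) - log (s + a)) := by
  have hf := differentiableOn_log_add_sub_log_add hab
  refine MonotoneOn.convexOn_of_deriv (convex_Ioi _) hf.continuousOn
    (by rwa [interior_Ioi]) ?_
  rw [interior_Ioi]
  intro s hs t ht hst
  have hsa : 0 < s + a := by simp_all; linarith
  rw [deriv_log_add_sub_log_add hs hab, deriv_log_add_sub_log_add ht hab]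
  rw [div_le_div_iff₀ (by nlinarith) (by nlinarith)]
  have hden : (s + a) * (s + b) ≤ (t + a) * (t + b) :=
    mul_le_mul (by linarith) (by linarith) (by linarith) (by linarith)
  nlinarith

lemma log_one_add_mul_div_one_add_mul {x : ℝ} (hx : 0 < x) (ha : 0 < 1 + x * a)
    (hb : 0 < 1 + x * b) :
    log ((1 + x * b) / (1 + x * a)) = log (x⁻¹ + b) - log (x⁻¹ + a) := by
  have key : ∀ c, x⁻¹ + c = (1 + x * c) / x := fun c => by field_simp
  rw [key, key, log_div hb.ne' hx.ne', log_div ha.ne' hx.ne', log_div hb.ne' ha.ne']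
  ring

end LogRatio

theorem ConvexOn.sum_mul_le_sum_mul_of_antitoneOn {D : Set ℝ} {F : ℝ → ℝ}
    (hconv : ConvexOn ℝ D F) (hanti : AntitoneOn F D) {ι κ : Type*} {s : Finset ι}
    {t : Finset κ} {p x : ι → ℝ} {q y : κ → ℝ} (hp : ∀ i ∈ s, 0 ≤ p i) (hpsum : ∑ i ∈ s, p i = 1)
    (hq : ∀ j ∈ t, 0 ≤ q j) (hqsum : ∑ j ∈ t, q j = 1) (hx : ∀ i ∈ s, x i ∈ D)
    (hy : ∀ j ∈ t, y j ∈ D) (hxy : ∀ j ∈ t, ∑ i ∈ s, p i * x i ≤ y j) :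
    ∑ j ∈ t, q j * F (y j) ≤ ∑ i ∈ s, p i * F (x i) := by
  have hmean : ∑ i ∈ s, p i * x i ∈ D := hconv.1.sum_mem hp hpsum hx
  calc ∑ j ∈ t, q j * F (y j)
      ≤ ∑ j ∈ t, q j * F (∑ i ∈ s, p i * x i) := Finset.sum_le_sum fun j hj =>
        mul_le_mul_of_nonneg_left (hanti hmean (hy j hj) (hxy j hj)) (hq j hj)
    _ = F (∑ i ∈ s, p i * x i) := by rw [← Finset.sum_mul, hqsum, one_mul]
    _ ≤ ∑ i ∈ s, p i * F (x i) := hconv.map_sum_le hp hpsum hx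

/-- The chain of inequalities (thm4:a)–(thm4:d) in the proof of Theorem 6
(cap:deg-gen): if `1/g_m² ≥ ∑ pᵢ/hᵢ²` and `0 ≤ Q* ≤ Q`, then
`∑ pᵢ log((1 + hᵢ²Q)/(1 + hᵢ²Q*)) ≥ ∑ qⱼ log((1 + gⱼ²Q)/(1 + gⱼ²Q*))`.
Here `n, m ≥ 1` are encoded as `n + 1`, `m + 1`; the logarithm is natural. -/
theorem stmt16 (n m : ℕ)
    (h : Fin (n + 1) → ℝ) (hh0 : ∀ i, 0 < h i)
    (g : Fin (m + 1) → ℝ) (hg0 : ∀ j, 0 < g j) (hgmono : StrictMono g)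
    (p : Fin (n + 1) → ℝ) (hp : ∀ i, 0 < p i) (hpsum : ∑ i, p i = 1)
    (q : Fin (m + 1) → ℝ) (hq : ∀ j, 0 < q j) (hqsum : ∑ j, q j = 1)
    (Q Qstar : ℝ) (hQs : 0 ≤ Qstar) (hQsQ : Qstar ≤ Q)
    (hcond : 1 / (g (Fin.last m)) ^ 2 ≥ ∑ i, p i / (h i) ^ 2) :
    ∑ i, p i * Real.log ((1 + (h i) ^ 2 * Q) / (1 + (h i) ^ 2 * Qstar)) ≥
      ∑ j, q j * Real.log ((1 + (g j) ^ 2 * Q) / (1 + (g j) ^ 2 * Qstar)) := by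
  have hdom : ∀ {x : ℝ}, 0 < x → x⁻¹ ∈ Ioi (-Qstar) := fun hx => by
    simp only [mem_Ioi]; linarith [inv_pos.2 hx]
  have hrepr : ∀ {x : ℝ}, 0 < x → log ((1 + x * Q) / (1 + x * Qstar)) =
      log (x⁻¹ + Q) - log (x⁻¹ + Qstar) := fun hx =>
    log_one_add_mul_div_one_add_mul hx (by positivity) (by nlinarith)
  simp only [hrepr (pow_pos (hh0 _) 2), hrepr (pow_pos (hg0 _) 2)]
  refine (convexOn_log_add_sub_log_add hQsQ).sum_mul_le_sum_mul_of_antitoneOn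
    (antitoneOn_log_add_sub_log_add hQsQ) (fun i _ => (hp i).le) hpsum (fun j _ => (hq j).le)
    hqsum (fun i _ => hdom (pow_pos (hh0 i) 2)) (fun j _ => hdom (pow_pos (hg0 j) 2))
    fun j _ => ?_
  have hgj : (g (Fin.last m) ^ 2)⁻¹ ≤ (g j ^ 2)⁻¹ := inv_anti₀ (pow_pos (hg0 j) 2)
    (pow_le_pow_left₀ (hg0 j).le (hgmono.monotone (Fin.le_last j)) 2)
  simp only [div_eq_mul_inv] at hcond
  linarith
end
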